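/- arXiv:quant-ph/0108062 — 6 statements merged into one kernel-verified Lean document; each statement's English description precedes it below -/
import Mathlib

section
/- Let V be a unitary operator on ℂᵈ ⊗ ℂᵈ that is diagonal in the computational basis, with V|jk⟩ = exp(iθ_{jk})|jk⟩. Then V maps every decomposable tensor (tensor product of two vectors) to a decomposable tensor if and only if for all j, k, p, q one has θ_{jk} + θ_{pq} ≡ θ_{jq} + θ_{pk} (mod 2π). -/
open Matrix Kronecker Complex

/-- The tensor (Kronecker) product of two vectors of `ℂᵈ`, as a vector of `ℂᵈ ⊗ ℂᵈ`. -/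
def tensorVec {d : ℕ} (x y : Fin d → ℂ) : Fin d × Fin d → ℂ := fun p => x p.1 * y p.2

/-- A vector of `ℂᵈ ⊗ ℂᵈ` is decomposable if it is a tensor product of two vectors. -/
def Decomposable {d : ℕ} (z : Fin d × Fin d → ℂ) : Prop := ∃ u v : Fin d → ℂ, z = tensorVec u v

/-- A gate on `ℂᵈ ⊗ ℂᵈ` is primitive if it maps decomposable tensors to decomposable tensors. -/
def Primitive {d : ℕ} (V : Matrix (Fin d × Fin d) (Fin d × Fin d) ℂ) : Prop :=
  ∀ x y : Fin d → ℂ, Decomposable (V.mulVec (tensorVec x y))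

lemma exp_eq_of_sub {a b : ℝ} {n : ℤ} (h : a - b = 2 * Real.pi * n) :
    Complex.exp ((a : ℂ) * Complex.I) = Complex.exp ((b : ℂ) * Complex.I) := by
  have : (a : ℂ) * Complex.I = (b : ℂ) * Complex.I + n * (2 * Real.pi * Complex.I) := by
    have : (a : ℂ) = b + 2 * Real.pi * n := by
      have := congrArg (Complex.ofReal) h
      push_cast at this ⊢
      linear_combination this
    rw [this]; ring
  rw [this, Complex.exp_add, Complex.exp_int_mul_two_pi_mul_I, mul_one]

lemma sub_of_exp_eq {a b : ℝ}
    (h : Complex.exp ((a : ℂ) * Complex.I) = Complex.exp ((b : ℂ) * Complex.I)) :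
    ∃ n : ℤ, a - b = 2 * Real.pi * n := by
  rw [Complex.exp_eq_exp_iff_exists_int] at h
  obtain ⟨n, hn⟩ := h
  refine ⟨n, ?_⟩
  have hI : Complex.I ≠ 0 := Complex.I_ne_zero
  have hc : ((a : ℂ) - b) = 2 * Real.pi * (n : ℂ) := by
    refine mul_right_cancel₀ hI ?_
    linear_combination hn
  exact_mod_cast hc

/-- A diagonal gate `V|jk⟩ = e^{iθ_{jk}}|jk⟩` is primitive iff
`θ_{jk} + θ_{pq} ≡ θ_{jq} + θ_{pk} (mod 2π)` for all `j,k,p,q`. -/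
theorem stmt3 {d : ℕ} (θ : Fin d → Fin d → ℝ) :
    Primitive (Matrix.diagonal fun p : Fin d × Fin d => Complex.exp ((θ p.1 p.2 : ℂ) * Complex.I))
      ↔ ∀ j k p q : Fin d, ∃ n : ℤ,
        (θ j k + θ p q) - (θ j q + θ p k) = 2 * Real.pi * n := by
  constructor
  · intro hP j k p q
    obtain ⟨u, v, huv⟩ := hP (fun _ => 1) (fun _ => 1)
    have hE : ∀ a b : Fin d, Complex.exp ((θ a b : ℂ) * Complex.I) = u a * v b := by
      intro a b
      have := congrFun huv (a, b)
      simpa [Matrix.mulVec_diagonal, tensorVec] using this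
    have key : Complex.exp ((θ j k : ℂ) * Complex.I) * Complex.exp ((θ p q : ℂ) * Complex.I)
        = Complex.exp ((θ j q : ℂ) * Complex.I) * Complex.exp ((θ p k : ℂ) * Complex.I) := by
      rw [hE, hE, hE, hE]; ring
    rw [← Complex.exp_add, ← Complex.exp_add] at key
    have : Complex.exp (((θ j k + θ p q : ℝ) : ℂ) * Complex.I)
        = Complex.exp (((θ j q + θ p k : ℝ) : ℂ) * Complex.I) := by
      push_cast; convert key using 2 <;> ring
    exact sub_of_exp_eq this
  · intro h x y
    rcases Nat.eq_zero_or_pos d with hd | hd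
    · subst hd
      exact ⟨fun i => i.elim0, fun i => i.elim0, funext fun p => p.1.elim0⟩
    · let j0 : Fin d := ⟨0, hd⟩
      refine ⟨fun j => Complex.exp ((θ j j0 : ℂ) * Complex.I) * x j,
        fun k => Complex.exp (((θ j0 k - θ j0 j0 : ℝ) : ℂ) * Complex.I) * y k, ?_⟩
      funext p
      obtain ⟨j, k⟩ := p
      obtain ⟨n, hn⟩ := h j k j0 j0
      have hexp : Complex.exp ((θ j k : ℂ) * Complex.I)
          = Complex.exp (((θ j j0 + (θ j0 k - θ j0 j0) : ℝ) : ℂ) * Complex.I) := by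
        exact exp_eq_of_sub (by linarith)
      have : Complex.exp (((θ j j0 + (θ j0 k - θ j0 j0) : ℝ) : ℂ) * Complex.I)
          = Complex.exp ((θ j j0 : ℂ) * Complex.I)
            * Complex.exp (((θ j0 k - θ j0 j0 : ℝ) : ℂ) * Complex.I) := by
        rw [← Complex.exp_add]; push_cast; ring_nf
      simp only [Matrix.mulVec_diagonal, tensorVec]
      rw [hexp, this]; ring
end

section
/- Let U be a unitary operator on ℂᵈ and define the controlled gate X_U on ℂᵈ ⊗ ℂᵈ by X_U(|0⟩ ⊗ |k⟩) = |0⟩ ⊗ U|k⟩ and X_U(|j⟩ ⊗ |k⟩) = |j⟩ ⊗ |k⟩ for j ≠ 0. Then X_U is primitive (maps all decomposable tensors to decomposable tensors) if and only if U is a scalar multiple of the identity, U = e^{iθ} I. -/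
open Matrix Kronecker Complex

/-!
Applying `X_U` to `(|0⟩ + |1⟩) ⊗ y` gives `|0⟩ ⊗ U y + |1⟩ ⊗ y`, which is a product tensor only
if `U y` is parallel to `y`. Hence every vector is an eigenvector of `U`, so `U` is a scalar, and
unitarity makes that scalar a phase. Conversely `X_{c I} (x ⊗ y) = x' ⊗ y`, where `x'` is `x`
with its `0`-th coordinate multiplied by `c`.
-/

def controlledGate {d : ℕ} [NeZero d] (U : Matrix (Fin d) (Fin d) ℂ) :
    Matrix (Fin d × Fin d) (Fin d × Fin d) ℂ :=
  Matrix.of fun p q : Fin d × Fin d =>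
    if p.1 = q.1 then (if p.1 = 0 then U p.2 q.2 else if p.2 = q.2 then 1 else 0) else 0

lemma controlledGate_mulVec_tensorVec {d : ℕ} [NeZero d] (U : Matrix (Fin d) (Fin d) ℂ)
    (x y : Fin d → ℂ) (j k : Fin d) :
    (controlledGate U *ᵥ tensorVec x y) (j, k) = x j * (if j = 0 then U *ᵥ y else y) k := by
  simp only [controlledGate, mulVec, dotProduct, of_apply, tensorVec, Fintype.sum_prod_type]
  rw [Finset.sum_eq_single j (fun i _ hij => by simp [Ne.symm hij]) (by simp)]
  by_cases hj : j = 0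
  · simp [hj, mulVec, dotProduct, Finset.mul_sum, mul_left_comm]
  · simp [hj]

lemma exists_mulVec_eq_smul_of_primitive {d : ℕ} [NeZero d] (hd : 2 ≤ d)
    {U : Matrix (Fin d) (Fin d) ℂ} (hP : Primitive (controlledGate U)) (y : Fin d → ℂ) :
    ∃ c : ℂ, U *ᵥ y = c • y := by
  set one : Fin d := ⟨1, hd⟩
  have hone : one ≠ 0 := by simp [one, Fin.ext_iff]
  obtain ⟨u, v, huv⟩ := hP (Pi.single 0 1 + Pi.single one 1) y
  have hUy : U *ᵥ y = u 0 • v := by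
    ext k
    simpa [controlledGate_mulVec_tensorVec, tensorVec, Pi.single_eq_of_ne' hone]
      using congrFun huv (0, k)
  have hy : y = u one • v := by
    ext k
    simpa [controlledGate_mulVec_tensorVec, tensorVec, hone, Pi.single_eq_of_ne hone]
      using congrFun huv (one, k)
  by_cases hu : u one = 0
  · exact ⟨0, by simp [hy, hu]⟩
  · exact ⟨u 0 / u one, by rw [hUy, hy, smul_smul, div_mul_cancel₀ _ hu]⟩

lemma Matrix.exists_eq_smul_one_of_forall_exists_mulVec_eq_smul {n K : Type*} [Fintype n]
    [DecidableEq n] [Field K] {A : Matrix n n K} (h : ∀ v, ∃ c : K, A *ᵥ v = c • v) :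
    ∃ c : K, A = c • 1 := by
  obtain ⟨c, hc⟩ := (toLin' A).exists_eq_smul_id_of_forall_notLinearIndependent fun v => by
    obtain ⟨a, ha⟩ := h v
    rw [LinearIndependent.pair_iff]
    push Not
    exact ⟨a, -1, by simp [toLin'_apply, ha], by simp⟩
  exact ⟨c, by simpa using congrArg LinearMap.toMatrix' hc⟩

lemma exists_eq_exp_of_smul_one_mem_unitaryGroup {n : Type*} [Fintype n] [DecidableEq n]
    [Nonempty n] {c : ℂ} (hc : c • (1 : Matrix n n ℂ) ∈ unitaryGroup n ℂ) :
    ∃ θ : ℝ, c = exp (θ * I) := by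
  have hmem : c ∈ unitary ℂ := by
    rw [mem_unitaryGroup_iff, star_smul, smul_mul_smul, star_one, mul_one] at hc
    obtain ⟨i⟩ := ‹Nonempty n›
    simpa [Unitary.mem_iff_self_mul_star] using congrFun (congrFun hc i) i
  refine ⟨arg c, ?_⟩
  simpa [CStarRing.norm_of_mem_unitary hmem] using (norm_mul_exp_arg_mul_I c).symm

lemma primitive_controlledGate_smul_one {d : ℕ} [NeZero d] (c : ℂ) :
    Primitive (controlledGate (c • 1 : Matrix (Fin d) (Fin d) ℂ)) := by
  intro x y
  refine ⟨Function.update x 0 (c * x 0), y, funext fun ⟨j, k⟩ => ?_⟩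
  rw [controlledGate_mulVec_tensorVec]
  by_cases hj : j = 0
  · subst hj; simp [tensorVec, smul_mulVec, mul_left_comm, mul_assoc]
  · simp [tensorVec, hj]

/-- The controlled gate `X_U` (applying `U` on the second factor when the
first qudit is `|0⟩`) is primitive iff `U` is a scalar `e^{iθ}I`. -/
theorem stmt6 {d : ℕ} [NeZero d] (hd : 2 ≤ d)
    (U : Matrix (Fin d) (Fin d) ℂ) (hU : U ∈ Matrix.unitaryGroup (Fin d) ℂ) :
    Primitive (Matrix.of fun p q : Fin d × Fin d =>
        if p.1 = q.1 then (if p.1 = 0 then U p.2 q.2 else if p.2 = q.2 then 1 else 0) else 0)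
      ↔ ∃ θ : ℝ, U = Complex.exp ((θ : ℂ) * Complex.I) • (1 : Matrix (Fin d) (Fin d) ℂ) := by
  refine ⟨fun hP => ?_, fun ⟨θ, hθ⟩ => hθ ▸ primitive_controlledGate_smul_one _⟩
  obtain ⟨c, rfl⟩ :=
    exists_eq_smul_one_of_forall_exists_mulVec_eq_smul (exists_mulVec_eq_smul_of_primitive hd hP)
  obtain ⟨θ, rfl⟩ := exists_eq_exp_of_smul_one_mem_unitaryGroup hU
  exact ⟨θ, rfl⟩
end

section
/- The set L of primitive gates is a closed subgroup of the unitary group U(d²) acting on ℂᵈ ⊗ ℂᵈ. -/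
open Matrix Kronecker Complex

/-!
A vector of `ℂᵈ ⊗ ℂᵈ` is decomposable exactly when its `2 × 2` minors vanish, so the primitive
gates form a closed submonoid of the unitary group. A closed submonoid of a compact group is a
subgroup: `x⁻¹` is a limit of positive powers of `x`.
-/

theorem Submonoid.inv_mem_of_isClosed {G : Type*} [Group G] [TopologicalSpace G] [CompactSpace G]
    [IsTopologicalGroup G] {S : Submonoid G} (hS : IsClosed (S : Set G)) {x : G} (hx : x ∈ S) :
    x⁻¹ ∈ S := by
  have hx' : x⁻¹ ∈ _root_.closure (Set.range (x ^ · : ℤ → G)) :=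
    _root_.subset_closure ⟨-1, zpow_neg_one x⟩
  rw [closure_range_zpow_eq_pow] at hx'
  exact _root_.closure_minimal (Set.range_subset_iff.2 fun n => S.pow_mem hx n) hS hx'

theorem isCompact_unitary {E : Type*} [NormedRing E] [StarRing E] [CStarRing E] [ProperSpace E] :
    IsCompact (unitary E : Set E) :=
  (isCompact_closedBall 0 ‖(1 : E)‖).of_isClosed_subset isClosed_unitary fun U hU => by
    simpa using (CStarRing.norm_mem_unitary_mul 1 hU).le

open scoped Matrix.Norms.L2Operator in
instance Matrix.compactSpace_unitaryGroup {n : Type*} [Fintype n] [DecidableEq n] :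
    CompactSpace (Matrix.unitaryGroup n ℂ) :=
  isCompact_iff_compactSpace.mp isCompact_unitary

section Primitive

variable {d : ℕ}

theorem decomposable_iff_minors_eq_zero (z : Fin d × Fin d → ℂ) :
    Decomposable z ↔ ∀ i k j l, z (i, j) * z (k, l) = z (i, l) * z (k, j) := by
  constructor
  · rintro ⟨u, v, rfl⟩ i k j l
    simp only [tensorVec]
    ring
  · intro h
    by_cases hz : z = 0
    · exact ⟨0, 0, by ext; simp [hz, tensorVec]⟩
    obtain ⟨⟨i₀, j₀⟩, hp⟩ := Function.ne_iff.mp hz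
    refine ⟨fun i => z (i, j₀), fun j => z (i₀, j) / z (i₀, j₀), ?_⟩
    ext ⟨i, j⟩
    simp only [tensorVec]
    rw [mul_div_assoc', h i i₀ j₀ j, mul_div_assoc, div_self hp, mul_one]

theorem isClosed_setOf_decomposable : IsClosed {z : Fin d × Fin d → ℂ | Decomposable z} := by
  simp only [decomposable_iff_minors_eq_zero, Set.ofPred_forall]
  exact isClosed_iInter fun i => isClosed_iInter fun k => isClosed_iInter fun j =>
    isClosed_iInter fun l => isClosed_eq (by fun_prop) (by fun_prop)

theorem isClosed_setOf_primitive :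
    IsClosed {V : Matrix (Fin d × Fin d) (Fin d × Fin d) ℂ | Primitive V} := by
  simp only [Primitive, Set.ofPred_forall]
  exact isClosed_iInter fun x => isClosed_iInter fun y =>
    isClosed_setOf_decomposable.preimage (continuous_id.matrix_mulVec continuous_const)

variable (d) in
def primitiveSubmonoid : Submonoid (Matrix (Fin d × Fin d) (Fin d × Fin d) ℂ) where
  carrier := {V | Primitive V}
  one_mem' x y := ⟨x, y, one_mulVec _⟩
  mul_mem' {A B} hA hB x y := by
    obtain ⟨u, v, huv⟩ := hB x y
    obtain ⟨s, t, hst⟩ := hA u v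
    exact ⟨s, t, by rw [← mulVec_mulVec, huv, hst]⟩

end Primitive

/-- The primitive gates form a closed subgroup of the unitary group of
`ℂᵈ ⊗ ℂᵈ`. -/
theorem stmt7 {d : ℕ} :
    ∃ L : Subgroup (Matrix.unitaryGroup (Fin d × Fin d) ℂ),
      ((L : Set (Matrix.unitaryGroup (Fin d × Fin d) ℂ)) =
        {V : Matrix.unitaryGroup (Fin d × Fin d) ℂ | Primitive (V : Matrix (Fin d × Fin d) (Fin d × Fin d) ℂ)}) ∧
      IsClosed (L : Set (Matrix.unitaryGroup (Fin d × Fin d) ℂ)) := by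
  have hclosed : IsClosed {V : Matrix.unitaryGroup (Fin d × Fin d) ℂ |
      Primitive (V : Matrix (Fin d × Fin d) (Fin d × Fin d) ℂ)} :=
    isClosed_setOf_primitive.preimage continuous_subtype_val
  exact ⟨{ (primitiveSubmonoid d).comap (Matrix.unitaryGroup (Fin d × Fin d) ℂ).subtype with
    inv_mem' := Submonoid.inv_mem_of_isClosed hclosed }, rfl, hclosed⟩
end

section
/- The inverse of a primitive gate is primitive: if V is a unitary on ℂᵈ ⊗ ℂᵈ mapping every decomposable tensor to a decomposable tensor, then V⁻¹ also maps every decomposable tensor to a decomposable tensor. -/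
open Matrix Kronecker Complex

/-!
For `x ≠ 0` the row `y ↦ V (x ⊗ y)` is an injective linear map with decomposable values. A linear
space of decomposable tensors lies in a slice `u ⊗ ℂᵈ` or `ℂᵈ ⊗ v` (the sum of two of its elements
is again decomposable), and counting dimensions the row fills that slice. Adding a row of each kind
gives a contradiction, so after swapping the factors every row is a slice `u(x) ⊗ ℂᵈ`. Since `V` is
onto, two of them, `u₁ ⊗ ℂᵈ` and `u₂ ⊗ ℂᵈ`, have non-proportional `u₁, u₂`. Given `a ⊗ b`, pick `y`
with `V (x₁ ⊗ y) = u₁ ⊗ b`: the column `x ↦ V (x ⊗ y)` meets both slices, so it is `ℂᵈ ⊗ b`, and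
it contains `a ⊗ b`.
-/

open Function LinearMap

section Proportional

variable {ι K : Type*} [Field K]

/-- Vanishing of all `2 × 2` minors of `(u, v)`: unlike `v ∈ K ∙ u`, this is symmetric and holds
when either vector is zero. -/
def Proportional (u v : ι → K) : Prop := ∀ i j, u i * v j = u j * v i

theorem Proportional.symm {u v : ι → K} (h : Proportional u v) : Proportional v u :=
  fun i j => by linear_combination h j i

theorem Proportional.exists_eq_smul {u v : ι → K} (h : Proportional u v) (hu : u ≠ 0) :
    ∃ c : K, v = c • u := by
  obtain ⟨i, hi⟩ := Function.ne_iff.1 hu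
  refine ⟨v i / u i, funext fun j => ?_⟩
  rw [Pi.smul_apply, smul_eq_mul, div_mul_eq_mul_div, eq_div_iff hi]
  linear_combination h i j

theorem proportional_smul_smul (c c' : K) (u : ι → K) : Proportional (c • u) (c' • u) :=
  fun i j => by simp only [Pi.smul_apply, smul_eq_mul]; ring

theorem not_proportional_single [DecidableEq ι] {i j : ι} (hij : i ≠ j) :
    ¬ Proportional (Pi.single i (1 : K)) (Pi.single j 1) := by
  intro h
  simpa [hij, hij.symm] using h i j

end Proportional

theorem Submodule.eq_top_or_eq_top_of_forall_mem_or_mem {R M : Type*} [Ring R] [AddCommGroup M]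
    [Module R M] {p q : Submodule R M} (h : ∀ y, y ∈ p ∨ y ∈ q) : p = ⊤ ∨ q = ⊤ := by
  by_contra! hpq
  obtain ⟨y₁, hy₁⟩ := SetLike.exists_not_mem_of_ne_top p hpq.1
  obtain ⟨y₂, hy₂⟩ := SetLike.exists_not_mem_of_ne_top q hpq.2
  rcases h (y₁ + y₂) with hp | hq
  · exact hy₁ ((p.add_mem_iff_left ((h y₂).resolve_right hy₂)).1 hp)
  · exact hy₂ ((q.add_mem_iff_right ((h y₁).resolve_left hy₁)).1 hq)

namespace LinearMap

variable {R E M N : Type*} [Ring R] [AddCommGroup E] [AddCommGroup M] [AddCommGroup N]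
  [Module R E] [Module R M] [Module R N]

theorem range_le_or_range_le_of_forall_mem_or_mem (f : E →ₗ[R] M) (g : E →ₗ[R] N)
    {p : Submodule R M} {q : Submodule R N} (h : ∀ y, f y ∈ p ∨ g y ∈ q) :
    range f ≤ p ∨ range g ≤ q := by
  simp only [range_le_iff_comap]
  exact Submodule.eq_top_or_eq_top_of_forall_mem_or_mem h

end LinearMap

theorem LinearMap.range_eq_of_injective_of_range_le {K V W : Type*} [Field K] [AddCommGroup V]
    [AddCommGroup W] [Module K V] [Module K W] [FiniteDimensional K V] {f g : V →ₗ[K] W}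
    (hf : Injective f) (h : range f ≤ range g) : range f = range g :=
  Submodule.eq_of_le_of_finrank_le h ((finrank_range_le g).trans (finrank_range_of_inj hf).ge)

variable {d : ℕ}

@[simp] theorem tensorVec_apply (x y : Fin d → ℂ) (i j : Fin d) :
    tensorVec x y (i, j) = x i * y j := rfl

def tensorVecBilin : (Fin d → ℂ) →ₗ[ℂ] (Fin d → ℂ) →ₗ[ℂ] (Fin d × Fin d → ℂ) :=
  LinearMap.mk₂ ℂ tensorVec
    (fun _ _ _ => funext fun _ => add_mul _ _ _) (fun _ _ _ => funext fun _ => mul_assoc _ _ _)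
    (fun _ _ _ => funext fun _ => mul_add _ _ _) (fun _ _ _ => funext fun _ => mul_left_comm _ _ _)

@[simp] theorem tensorVecBilin_apply (x y : Fin d → ℂ) : tensorVecBilin x y = tensorVec x y := rfl

@[simp] theorem tensorVec_zero_left (y : Fin d → ℂ) : tensorVec 0 y = 0 :=
  map_zero₂ tensorVecBilin y

@[simp] theorem tensorVec_zero_right (x : Fin d → ℂ) : tensorVec x 0 = 0 :=
  map_zero (tensorVecBilin x)

theorem tensorVec_smul_left (c : ℂ) (x y : Fin d → ℂ) : tensorVec (c • x) y = c • tensorVec x y :=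
  map_smul₂ tensorVecBilin c x y

theorem tensorVec_smul_right (c : ℂ) (x y : Fin d → ℂ) :
    tensorVec x (c • y) = c • tensorVec x y :=
  map_smul (tensorVecBilin x) c y

theorem tensorVec_add_left (x x' y : Fin d → ℂ) :
    tensorVec (x + x') y = tensorVec x y + tensorVec x' y :=
  map_add₂ tensorVecBilin x x' y

theorem tensorVec_eq_zero_iff {x y : Fin d → ℂ} : tensorVec x y = 0 ↔ x = 0 ∨ y = 0 := by
  refine ⟨fun h => ?_, by rintro (rfl | rfl) <;> simp⟩
  by_contra! hxy
  obtain ⟨i, hi⟩ := Function.ne_iff.1 hxy.1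
  obtain ⟨j, hj⟩ := Function.ne_iff.1 hxy.2
  exact mul_ne_zero hi hj (congrFun h (i, j))

theorem tensorVecBilin_injective {x : Fin d → ℂ} (hx : x ≠ 0) : Injective (tensorVecBilin x) :=
  (injective_iff_map_eq_zero _).2 fun _ h => (tensorVec_eq_zero_iff.1 h).resolve_left hx

theorem tensorVecBilin_flip_injective {y : Fin d → ℂ} (hy : y ≠ 0) :
    Injective (tensorVecBilin.flip y) :=
  (injective_iff_map_eq_zero _).2 fun _ h => (tensorVec_eq_zero_iff.1 h).resolve_right hy

theorem Decomposable.mul_eq_mul {z : Fin d × Fin d → ℂ} (h : Decomposable z) (i j k l : Fin d) :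
    z (i, j) * z (k, l) = z (i, l) * z (k, j) := by
  obtain ⟨a, b, rfl⟩ := h
  simp only [tensorVec_apply]
  ring

theorem Decomposable.proportional_or_proportional {u v u' v' : Fin d → ℂ}
    (h : Decomposable (tensorVec u v + tensorVec u' v')) :
    Proportional u u' ∨ Proportional v v' := by
  by_contra! hc
  simp only [Proportional, not_forall] at hc
  obtain ⟨⟨i, k, hik⟩, ⟨j, l, hjl⟩⟩ := hc
  have minor := h.mul_eq_mul i j k l
  simp only [Pi.add_apply, tensorVec_apply] at minor
  have : (u i * u' k - u k * u' i) * (v j * v' l - v l * v' j) = 0 := by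
    linear_combination minor
  rcases mul_eq_zero.1 this with h | h
  · exact hik (sub_eq_zero.1 h)
  · exact hjl (sub_eq_zero.1 h)

theorem decomposable_of_le_one (hd : d ≤ 1) (z : Fin d × Fin d → ℂ) : Decomposable z :=
  ⟨fun i => z (i, i), 1, funext fun ⟨i, j⟩ => by
    simp [show j = i from Fin.ext (by omega)]⟩

/-- The subspace `u ⊗ ℂᵈ`. -/
def leftSlice (u : Fin d → ℂ) : Submodule ℂ (Fin d × Fin d → ℂ) := range (tensorVecBilin u)

/-- The subspace `ℂᵈ ⊗ v`. -/
def rightSlice (v : Fin d → ℂ) : Submodule ℂ (Fin d × Fin d → ℂ) := range (tensorVecBilin.flip v)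

theorem tensorVec_mem_leftSlice (u v : Fin d → ℂ) : tensorVec u v ∈ leftSlice u := ⟨v, rfl⟩

theorem tensorVec_mem_rightSlice (u v : Fin d → ℂ) : tensorVec u v ∈ rightSlice v := ⟨u, rfl⟩

theorem leftSlice_le_of_proportional {u₀ u : Fin d → ℂ} (hu₀ : u₀ ≠ 0) (h : Proportional u₀ u) :
    leftSlice u ≤ leftSlice u₀ := by
  obtain ⟨c, rfl⟩ := h.exists_eq_smul hu₀
  rintro _ ⟨w, rfl⟩
  exact ⟨c • w, by simp⟩

theorem rightSlice_le_of_proportional {v₀ v : Fin d → ℂ} (hv₀ : v₀ ≠ 0) (h : Proportional v₀ v) :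
    rightSlice v ≤ rightSlice v₀ := by
  obtain ⟨c, rfl⟩ := h.exists_eq_smul hv₀
  rintro _ ⟨w, rfl⟩
  exact ⟨c • w, by simp⟩

theorem exists_eq_smul_of_tensorVec_mem_leftSlice {u₀ u v : Fin d → ℂ}
    (h : tensorVec u v ∈ leftSlice u₀) (hv : v ≠ 0) : ∃ c : ℂ, u = c • u₀ := by
  obtain ⟨w, hw⟩ := h
  obtain ⟨j, hj⟩ := Function.ne_iff.1 hv
  refine ⟨w j / v j, funext fun i => ?_⟩
  have := congrFun hw (i, j)
  simp only [tensorVecBilin_apply, tensorVec_apply] at this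
  rw [Pi.smul_apply, smul_eq_mul, div_mul_eq_mul_div, eq_div_iff hj]
  linear_combination -this

theorem exists_eq_smul_of_tensorVec_mem_rightSlice {v₀ u v : Fin d → ℂ}
    (h : tensorVec u v ∈ rightSlice v₀) (hu : u ≠ 0) : ∃ c : ℂ, v = c • v₀ := by
  obtain ⟨w, hw⟩ := h
  obtain ⟨i, hi⟩ := Function.ne_iff.1 hu
  refine ⟨w i / u i, funext fun j => ?_⟩
  have := congrFun hw (i, j)
  simp only [flip_apply, tensorVecBilin_apply, tensorVec_apply] at this
  rw [Pi.smul_apply, smul_eq_mul, div_mul_eq_mul_div, eq_div_iff hi]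
  linear_combination -this

theorem proportional_of_tensorVec_mem_leftSlice {u₀ u₁ u₂ v₁ v₂ : Fin d → ℂ}
    (h₁ : tensorVec u₁ v₁ ∈ leftSlice u₀) (h₂ : tensorVec u₂ v₂ ∈ leftSlice u₀)
    (hv₁ : v₁ ≠ 0) (hv₂ : v₂ ≠ 0) : Proportional u₁ u₂ := by
  obtain ⟨c₁, rfl⟩ := exists_eq_smul_of_tensorVec_mem_leftSlice h₁ hv₁
  obtain ⟨c₂, rfl⟩ := exists_eq_smul_of_tensorVec_mem_leftSlice h₂ hv₂
  exact proportional_smul_smul c₁ c₂ u₀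

theorem not_rightSlice_le_leftSlice (hd : 2 ≤ d) {u v : Fin d → ℂ} (hv : v ≠ 0) :
    ¬ rightSlice v ≤ leftSlice u := fun h =>
  not_proportional_single (i := ⟨0, by omega⟩) (j := ⟨1, by omega⟩) (by simp [Fin.ext_iff])
    (proportional_of_tensorVec_mem_leftSlice (h (tensorVec_mem_rightSlice _ v))
      (h (tensorVec_mem_rightSlice _ v)) hv hv)

theorem not_leftSlice_le_rightSlice (hd : 2 ≤ d) {u v : Fin d → ℂ} (hu : u ≠ 0) :
    ¬ leftSlice u ≤ rightSlice v := by
  intro h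
  obtain ⟨c₀, hc₀⟩ := exists_eq_smul_of_tensorVec_mem_rightSlice
    (h (tensorVec_mem_leftSlice u (Pi.single ⟨0, by omega⟩ 1))) hu
  obtain ⟨c₁, hc₁⟩ := exists_eq_smul_of_tensorVec_mem_rightSlice
    (h (tensorVec_mem_leftSlice u (Pi.single ⟨1, by omega⟩ 1))) hu
  exact not_proportional_single (by simp [Fin.ext_iff]) (hc₀ ▸ hc₁ ▸ proportional_smul_smul c₀ c₁ v)

theorem range_le_leftSlice_or_rightSlice {E : Type*} [AddCommGroup E] [Module ℂ E]
    {f : E →ₗ[ℂ] (Fin d × Fin d → ℂ)} (hf : f ≠ 0) (hdec : ∀ y, Decomposable (f y)) :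
    (∃ u ≠ 0, range f ≤ leftSlice u) ∨ (∃ v ≠ 0, range f ≤ rightSlice v) := by
  obtain ⟨y₀, hy₀⟩ : ∃ y₀, f y₀ ≠ 0 := by
    by_contra! h
    exact hf (LinearMap.ext h)
  obtain ⟨u₀, v₀, h₀⟩ := hdec y₀
  rw [h₀, Ne, tensorVec_eq_zero_iff, not_or] at hy₀
  have key : ∀ y, f y ∈ leftSlice u₀ ∨ f y ∈ rightSlice v₀ := by
    intro y
    obtain ⟨u, v, h⟩ := hdec y
    have hsum : Decomposable (tensorVec u₀ v₀ + tensorVec u v) := by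
      rw [← h₀, ← h, ← map_add]
      exact hdec _
    rw [h]
    exact hsum.proportional_or_proportional.imp
      (fun hu => leftSlice_le_of_proportional hy₀.1 hu (tensorVec_mem_leftSlice u v))
      (fun hv => rightSlice_le_of_proportional hy₀.2 hv (tensorVec_mem_rightSlice u v))
  exact (range_le_or_range_le_of_forall_mem_or_mem f f key).imp
    (fun h => ⟨u₀, hy₀.1, h⟩) (fun h => ⟨v₀, hy₀.2, h⟩)

theorem range_eq_leftSlice_or_rightSlice [NeZero d] {f : (Fin d → ℂ) →ₗ[ℂ] (Fin d × Fin d → ℂ)}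
    (hf : Injective f) (hdec : ∀ y, Decomposable (f y)) :
    (∃ u ≠ 0, range f = leftSlice u) ∨ (∃ v ≠ 0, range f = rightSlice v) :=
  (range_le_leftSlice_or_rightSlice (ne_zero_of_injective hf) hdec).imp
    (fun ⟨u, hu, h⟩ => ⟨u, hu, range_eq_of_injective_of_range_le hf h⟩)
    (fun ⟨v, hv, h⟩ => ⟨v, hv, range_eq_of_injective_of_range_le hf h⟩)

def tensorSwap : (Fin d × Fin d → ℂ) ≃ₗ[ℂ] (Fin d × Fin d → ℂ) :=
  LinearEquiv.funCongrLeft ℂ ℂ (Equiv.prodComm (Fin d) (Fin d))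

@[simp] theorem tensorSwap_tensorVec (x y : Fin d → ℂ) :
    tensorSwap (tensorVec x y) = tensorVec y x :=
  funext fun _ => mul_comm _ _

theorem Decomposable.tensorSwap {z : Fin d × Fin d → ℂ} (h : Decomposable z) :
    Decomposable (tensorSwap z) := by
  obtain ⟨u, v, rfl⟩ := h
  exact ⟨v, u, tensorSwap_tensorVec u v⟩

theorem map_tensorSwap_rightSlice (v : Fin d → ℂ) :
    (rightSlice v).map (tensorSwap (d := d)).toLinearMap = leftSlice v := by
  rw [rightSlice, ← range_comp]
  congr 1
  ext
  simp

theorem range_le_of_forall_tensorVec_mem {M : Type*} [AddCommGroup M] [Module ℂ M]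
    (V : (Fin d × Fin d → ℂ) →ₗ[ℂ] M) {S : Submodule ℂ M}
    (h : ∀ x y, V (tensorVec x y) ∈ S) : range V ≤ S := by
  rintro _ ⟨z, rfl⟩
  rw [← Finset.univ_sum_single z, map_sum]
  refine Submodule.sum_mem _ fun p _ => ?_
  have : Pi.single p (z p) = tensorVec (Pi.single p.1 (z p)) (Pi.single p.2 1) := by
    ext ⟨i, j⟩
    simp only [Pi.single_apply, Prod.ext_iff, tensorVec_apply]
    split_ifs <;> simp_all
  exact this ▸ h _ _

theorem not_range_le_leftSlice (hd : 2 ≤ d) {V : (Fin d × Fin d → ℂ) →ₗ[ℂ] (Fin d × Fin d → ℂ)}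
    (hV : Injective V) (u : Fin d → ℂ) : ¬ range V ≤ leftSlice u := by
  intro h
  have := (finrank_range_of_inj hV).symm.trans_le
    ((Submodule.finrank_mono h).trans (finrank_range_le (tensorVecBilin u)))
  simp at this
  nlinarith

section Endomorphism

variable {V : (Fin d × Fin d → ℂ) →ₗ[ℂ] (Fin d × Fin d → ℂ)}

theorem false_of_range_eq_leftSlice_of_range_eq_rightSlice (hd : 2 ≤ d)
    (hdec : ∀ x y, Decomposable (V (tensorVec x y))) {x₁ x₂ u v : Fin d → ℂ}
    (hu : u ≠ 0) (hv : v ≠ 0) (h₁ : range (V ∘ₗ tensorVecBilin x₁) = leftSlice u)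
    (h₂ : range (V ∘ₗ tensorVecBilin x₂) = rightSlice v) : False := by
  have key : ∀ y, V (tensorVec x₂ y) ∈ leftSlice u ∨ V (tensorVec x₁ y) ∈ rightSlice v := by
    intro y
    obtain ⟨w₁, hw₁⟩ : V (tensorVec x₁ y) ∈ leftSlice u := h₁ ▸ mem_range_self _ y
    obtain ⟨w₂, hw₂⟩ : V (tensorVec x₂ y) ∈ rightSlice v := h₂ ▸ mem_range_self _ y
    rw [← hw₁, ← hw₂]
    have hsum : Decomposable (tensorVec u w₁ + tensorVec w₂ v) := by
      rw [tensorVecBilin_apply] at hw₁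
      rw [flip_apply, tensorVecBilin_apply] at hw₂
      rw [hw₁, hw₂, ← map_add, ← tensorVec_add_left]
      exact hdec _ _
    exact hsum.proportional_or_proportional.imp
      (fun h => leftSlice_le_of_proportional hu h (tensorVec_mem_leftSlice w₂ v))
      (fun h => rightSlice_le_of_proportional hv h.symm (tensorVec_mem_rightSlice u w₁))
  rcases range_le_or_range_le_of_forall_mem_or_mem
    (V ∘ₗ tensorVecBilin x₂) (V ∘ₗ tensorVecBilin x₁) key with h | h
  · exact not_rightSlice_le_leftSlice hd hv (h₂ ▸ h)
  · exact not_leftSlice_le_rightSlice hd hu (h₁ ▸ h)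

theorem exists_tensorVec_eq_of_range_eq_leftSlice_of_not_proportional [NeZero d]
    (hV : Injective V) (hdec : ∀ x y, Decomposable (V (tensorVec x y)))
    {x₁ x₂ u₁ u₂ : Fin d → ℂ} (hx₂ : x₂ ≠ 0)
    (h₁ : range (V ∘ₗ tensorVecBilin x₁) = leftSlice u₁)
    (h₂ : range (V ∘ₗ tensorVecBilin x₂) = leftSlice u₂) (hu : ¬ Proportional u₁ u₂)
    (a b : Fin d → ℂ) : ∃ x y, V (tensorVec x y) = tensorVec a b := by
  rcases eq_or_ne b 0 with rfl | hb
  · exact ⟨0, 0, by simp⟩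
  have hu₁ : u₁ ≠ 0 := by
    rintro rfl
    exact hu fun i j => by simp
  obtain ⟨y, hy⟩ : tensorVec u₁ b ∈ range (V ∘ₗ tensorVecBilin x₁) :=
    h₁ ▸ tensorVec_mem_leftSlice u₁ b
  have hy₀ : y ≠ 0 := by
    rintro rfl
    have : tensorVec u₁ b = 0 := by simpa using hy.symm
    exact (tensorVec_eq_zero_iff.1 this).elim hu₁ hb
  obtain ⟨w, hw⟩ : V (tensorVec x₂ y) ∈ leftSlice u₂ := h₂ ▸ mem_range_self _ y
  have hw₀ : w ≠ 0 := by
    rintro rfl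
    have : tensorVec x₂ y = 0 := hV (by simpa using hw.symm)
    exact (tensorVec_eq_zero_iff.1 this).elim hx₂ hy₀
  rcases range_eq_leftSlice_or_rightSlice (f := V ∘ₗ tensorVecBilin.flip y)
    (hV.comp (tensorVecBilin_flip_injective hy₀))
    (fun x => hdec x y) with ⟨u, -, hcol⟩ | ⟨v, -, hcol⟩
  · refine absurd (proportional_of_tensorVec_mem_leftSlice (u₀ := u) ?_ ?_ hb hw₀) hu
    · exact hcol ▸ ⟨x₁, hy⟩
    · exact hcol ▸ ⟨x₂, hw.symm⟩
  · obtain ⟨c, rfl⟩ := exists_eq_smul_of_tensorVec_mem_rightSlice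
      (show tensorVec u₁ b ∈ rightSlice v from hcol ▸ ⟨x₁, hy⟩) hu₁
    obtain ⟨x, hx⟩ : tensorVec (c • a) v ∈ range (V ∘ₗ tensorVecBilin.flip y) :=
      hcol ▸ tensorVec_mem_rightSlice _ v
    exact ⟨x, y, by rw [tensorVec_smul_right, ← tensorVec_smul_left]; exact hx⟩

theorem exists_tensorVec_eq_of_forall_range_eq_leftSlice (hd : 2 ≤ d) (hV : Injective V)
    (hdec : ∀ x y, Decomposable (V (tensorVec x y)))
    (hrows : ∀ x ≠ 0, ∃ u ≠ 0, range (V ∘ₗ tensorVecBilin x) = leftSlice u)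
    (a b : Fin d → ℂ) : ∃ x y, V (tensorVec x y) = tensorVec a b := by
  have : NeZero d := ⟨by omega⟩
  obtain ⟨u₀, hu₀, h₀⟩ := hrows (Pi.single 0 1) (by simp)
  by_cases h : ∃ x ≠ 0, ∃ u, range (V ∘ₗ tensorVecBilin x) = leftSlice u ∧ ¬ Proportional u₀ u
  · obtain ⟨x, hx, u, hxu, hu⟩ := h
    exact exists_tensorVec_eq_of_range_eq_leftSlice_of_not_proportional hV hdec hx h₀ hxu hu a b
  push Not at h
  refine absurd (range_le_of_forall_tensorVec_mem V fun x y => ?_) (not_range_le_leftSlice hd hV u₀)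
  rcases eq_or_ne x 0 with rfl | hx
  · simp
  obtain ⟨u, -, hxu⟩ := hrows x hx
  exact leftSlice_le_of_proportional hu₀ (h x hx u hxu) (hxu ▸ mem_range_self _ y)

theorem exists_tensorVec_eq (hd : 2 ≤ d) (hV : Injective V)
    (hdec : ∀ x y, Decomposable (V (tensorVec x y))) (a b : Fin d → ℂ) :
    ∃ x y, V (tensorVec x y) = tensorVec a b := by
  have : NeZero d := ⟨by omega⟩
  have hrows (x : Fin d → ℂ) (hx : x ≠ 0) := range_eq_leftSlice_or_rightSlice
    (f := V ∘ₗ tensorVecBilin x) (hV.comp (tensorVecBilin_injective hx)) (hdec x)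
  by_cases hR : ∃ x₀ ≠ 0, ∃ v₀ ≠ 0, range (V ∘ₗ tensorVecBilin x₀) = rightSlice v₀
  · obtain ⟨x₀, hx₀, v₀, hv₀, h₀⟩ := hR
    obtain ⟨x, y, hxy⟩ := exists_tensorVec_eq_of_forall_range_eq_leftSlice
      (V := (tensorSwap (d := d)).toLinearMap ∘ₗ V) hd (tensorSwap.injective.comp hV)
      (fun x y => (hdec x y).tensorSwap)
      (fun x hx => by
        obtain ⟨v, hv, hxv⟩ := (hrows x hx).resolve_left fun ⟨u, hu, hxu⟩ =>
          false_of_range_eq_leftSlice_of_range_eq_rightSlice hd hdec hu hv₀ hxu h₀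
        exact ⟨v, hv, by rw [LinearMap.comp_assoc, range_comp, hxv, map_tensorSwap_rightSlice]⟩) b a
    exact ⟨x, y, tensorSwap.injective (by simpa using hxy)⟩
  · push Not at hR
    exact exists_tensorVec_eq_of_forall_range_eq_leftSlice hd hV hdec
      (fun x hx => (hrows x hx).resolve_right fun ⟨v, hv, hxv⟩ => hR x hx v hv hxv) a b

end Endomorphism

/-- The inverse of a primitive unitary gate is primitive. -/
theorem stmt8 {d : ℕ} (V : Matrix (Fin d × Fin d) (Fin d × Fin d) ℂ)
    (hV : V ∈ Matrix.unitaryGroup (Fin d × Fin d) ℂ) (h : Primitive V) :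
    Primitive V⁻¹ := by
  intro a b
  rcases le_or_gt d 1 with hd | hd
  · exact decomposable_of_le_one hd _
  have hVV : V⁻¹ * V = 1 := by
    rw [Matrix.inv_eq_left_inv (Unitary.star_mul_self_of_mem hV)]
    exact Unitary.star_mul_self_of_mem hV
  have hinj : Injective V.mulVecLin := fun z w hzw => by
    simpa [Matrix.mulVec_mulVec, hVV] using congrArg (V⁻¹ *ᵥ ·) hzw
  obtain ⟨x, y, hxy⟩ := exists_tensorVec_eq hd hinj h a b
  exact ⟨x, y, by rw [← hxy, Matrix.mulVecLin_apply, Matrix.mulVec_mulVec, hVV, Matrix.one_mulVec]⟩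
end

section
/- Let 𝔥 = {X⊗I + I⊗Y : X, Y ∈ 𝔲(d)} ⊆ 𝔲(d²) and 𝔤 = 𝔲(d²). There is no Lie subalgebra of 𝔤 strictly between 𝔥 and 𝔤: any Lie subalgebra 𝔷 with 𝔥 ⊆ 𝔷 ⊆ 𝔤 satisfies 𝔷 = 𝔥 or 𝔷 = 𝔤. -/
open Matrix Kronecker
namespace Stmt13
noncomputable section
variable {d : ℕ}
abbrev M2 (d : ℕ) := Matrix (Fin d) (Fin d) ℂ
abbrev M4 (d : ℕ) := Matrix (Fin d × Fin d) (Fin d × Fin d) ℂ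
def pt1 (u : M4 d) : M2 d := of fun b e => ∑ a, u (a,b) (a,e)
def pt2 (u : M4 d) : M2 d := of fun a c => ∑ b, u (a,b) (c,b)
def blk (u : M4 d) (a c : Fin d) : M2 d := of fun b e => u (a,b) (c,e)
lemma pt1_apply (u : M4 d) (b e : Fin d) : pt1 u b e = ∑ a, u (a,b) (a,e) := rfl
lemma pt2_apply (u : M4 d) (a c : Fin d) : pt2 u a c = ∑ b, u (a,b) (c,b) := rfl
lemma blk_apply (u : M4 d) (a c b e : Fin d) : blk u a c b e = u (a,b) (c,e) := rfl
def E (j k : Fin d) : M2 d := Matrix.single j k 1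
lemma E_apply (j k a b : Fin d) : E j k a b = if j = a ∧ k = b then 1 else 0 := by
  simp [E, Matrix.single]
def N1 (A : M2 d) (u : M4 d) : M4 d := (A ⊗ₖ (1 : M2 d)) * u - u * (A ⊗ₖ (1 : M2 d))
def N2 (A : M2 d) (u : M4 d) : M4 d := ((1 : M2 d) ⊗ₖ A) * u - u * ((1 : M2 d) ⊗ₖ A)
lemma N1_apply (A : M2 d) (u : M4 d) (a b c e : Fin d) :
    N1 A u (a,b) (c,e) = (∑ p, A a p * u (p,b) (c,e)) - ∑ p, u (a,b) (p,e) * A p c := by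
  simp [N1, Matrix.sub_apply, mul_apply, Fintype.sum_prod_type, kroneckerMap_apply, one_apply,
    ite_mul, mul_ite, Finset.sum_ite_eq, Finset.sum_ite_eq']
lemma N2_apply (A : M2 d) (u : M4 d) (a b c e : Fin d) :
    N2 A u (a,b) (c,e) = (∑ q, A b q * u (a,q) (c,e)) - ∑ q, u (a,b) (c,q) * A q e := by
  simp [N2, Matrix.sub_apply, mul_apply, Fintype.sum_prod_type, kroneckerMap_apply, one_apply,
    ite_mul, mul_ite, Finset.sum_ite_eq, Finset.sum_ite_eq']

lemma N1E_apply (j : Fin d) (u : M4 d) (a b c e : Fin d) :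
    N1 (E j j) u (a,b) (c,e)
      = ((if a = j then 1 else 0) - (if c = j then 1 else 0)) * u (a,b) (c,e) := by
  rw [N1_apply]
  simp only [E, Matrix.single, of_apply, ite_mul, mul_ite, one_mul, zero_mul, mul_one,
    mul_zero, ite_and, Finset.sum_ite_eq, Finset.mem_univ, if_true, sub_mul]
  by_cases h1 : j = a <;> by_cases h2 : j = c <;>
    simp [h1, h2, eq_comm] <;> (try (split <;> simp_all))

lemma N2E_apply (j : Fin d) (u : M4 d) (a b c e : Fin d) :
    N2 (E j j) u (a,b) (c,e)
      = ((if b = j then 1 else 0) - (if e = j then 1 else 0)) * u (a,b) (c,e) := by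
  rw [N2_apply]
  simp only [E, Matrix.single, of_apply, ite_mul, mul_ite, one_mul, zero_mul, mul_one,
    mul_zero, ite_and, Finset.sum_ite_eq, Finset.mem_univ, if_true, sub_mul]
  by_cases h1 : j = b <;> by_cases h2 : j = e <;>
    simp [h1, h2, eq_comm] <;> (try (split <;> simp_all))

/-- keep blocks with row index j (col ≠ j) -/
def f1keep (j : Fin d) (u : M4 d) : M4 d := (2:ℂ)⁻¹ • (N1 (E j j) (N1 (E j j) u) + N1 (E j j) u)
def f1drop (k : Fin d) (u : M4 d) : M4 d := (2:ℂ)⁻¹ • (N1 (E k k) (N1 (E k k) u) - N1 (E k k) u)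
def f2keep (j : Fin d) (u : M4 d) : M4 d := (2:ℂ)⁻¹ • (N2 (E j j) (N2 (E j j) u) + N2 (E j j) u)
def f2drop (k : Fin d) (u : M4 d) : M4 d := (2:ℂ)⁻¹ • (N2 (E k k) (N2 (E k k) u) - N2 (E k k) u)

lemma f1keep_apply (j : Fin d) (u : M4 d) (a b c e : Fin d) :
    f1keep j u (a,b) (c,e) = if a = j ∧ c ≠ j then u (a,b) (c,e) else 0 := by
  simp only [f1keep, Matrix.smul_apply, Matrix.add_apply, N1E_apply, smul_eq_mul]
  by_cases h1 : a = j <;> by_cases h2 : c = j <;> simp [h1, h2] <;> ring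
lemma f1drop_apply (k : Fin d) (u : M4 d) (a b c e : Fin d) :
    f1drop k u (a,b) (c,e) = if c = k ∧ a ≠ k then u (a,b) (c,e) else 0 := by
  simp only [f1drop, Matrix.smul_apply, Matrix.sub_apply, N1E_apply, smul_eq_mul]
  by_cases h1 : a = k <;> by_cases h2 : c = k <;> simp [h1, h2] <;> ring
lemma f2keep_apply (j : Fin d) (u : M4 d) (a b c e : Fin d) :
    f2keep j u (a,b) (c,e) = if b = j ∧ e ≠ j then u (a,b) (c,e) else 0 := by
  simp only [f2keep, Matrix.smul_apply, Matrix.add_apply, N2E_apply, smul_eq_mul]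
  by_cases h1 : b = j <;> by_cases h2 : e = j <;> simp [h1, h2] <;> ring
lemma f2drop_apply (k : Fin d) (u : M4 d) (a b c e : Fin d) :
    f2drop k u (a,b) (c,e) = if e = k ∧ b ≠ k then u (a,b) (c,e) else 0 := by
  simp only [f2drop, Matrix.smul_apply, Matrix.sub_apply, N2E_apply, smul_eq_mul]
  by_cases h1 : b = k <;> by_cases h2 : e = k <;> simp [h1, h2] <;> ring

lemma E_mul (p q r s : Fin d) : E p q * E r s = if q = r then E p s else 0 := by
  ext a b
  by_cases h : q = r <;>
    simp [E, Matrix.single, mul_apply, ite_and, h, Finset.sum_ite_eq, Finset.sum_ite_eq',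
      eq_comm] <;> by_cases h1 : p = a <;> by_cases h2 : s = b <;> simp [h1, h2]

lemma E_trace (p q : Fin d) : (E p q).trace = if p = q then 1 else 0 := by
  by_cases h : p = q <;>
    simp [E, Matrix.trace, Matrix.diag, Matrix.single, ite_and, h, Finset.sum_ite_eq, eq_comm]

lemma sub_kron (A B C : M2 d) : (A - B) ⊗ₖ C = A ⊗ₖ C - B ⊗ₖ C := by
  ext ⟨a,b⟩ ⟨c,e⟩; simp [kroneckerMap_apply, sub_mul]

lemma neg_kron (A C : M2 d) : (-A) ⊗ₖ C = -(A ⊗ₖ C) := by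
  ext ⟨a,b⟩ ⟨c,e⟩; simp [kroneckerMap_apply]

lemma kron_sub (A B C : M2 d) : A ⊗ₖ (B - C) = A ⊗ₖ B - A ⊗ₖ C := by
  ext ⟨a,b⟩ ⟨c,e⟩; simp [kroneckerMap_apply, mul_sub]

lemma kron_neg (A C : M2 d) : A ⊗ₖ (-C) = -(A ⊗ₖ C) := by
  ext ⟨a,b⟩ ⟨c,e⟩; simp [kroneckerMap_apply]

lemma N1_kron (X C B : M2 d) : N1 X (C ⊗ₖ B) = (X*C - C*X) ⊗ₖ B := by
  simp [N1, ← Matrix.mul_kronecker_mul, sub_kron]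

lemma N2_kron (Y C B : M2 d) : N2 Y (C ⊗ₖ B) = C ⊗ₖ (Y*B - B*Y) := by
  simp [N2, ← Matrix.mul_kronecker_mul, kron_sub]

section Gen
variable (U : Submodule ℂ (M4 d))
  (hU1 : ∀ A : M2 d, ∀ u ∈ U, N1 A u ∈ U) (hU2 : ∀ A : M2 d, ∀ u ∈ U, N2 A u ∈ U)

include hU1 in
lemma gen_first {j k : Fin d} (hjk : j ≠ k) {B : M2 d} (hB : E j k ⊗ₖ B ∈ U) :
    ∀ A : M2 d, A.trace = 0 → A ⊗ₖ B ∈ U := by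
  have mv : ∀ (X C : M2 d), C ⊗ₖ B ∈ U → (X*C - C*X) ⊗ₖ B ∈ U := by
    intro X C h
    simpa [N1_kron] using hU1 X _ h
  have neg_tr : ∀ C : M2 d, (0 - C) ⊗ₖ B ∈ U → C ⊗ₖ B ∈ U := by
    intro C h
    have := U.neg_mem h
    simpa [sub_kron, neg_kron] using this
  have h1 : ∀ t, t ≠ j → E j t ⊗ₖ B ∈ U := by
    intro t ht
    by_cases htk : t = k
    · rw [htk]; exact hB
    · have := mv (E k t) (E j k) hB
      rw [E_mul, E_mul, if_neg ht, if_pos rfl] at this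
      exact neg_tr _ this
  have h2 : ∀ s, s ≠ k → E s k ⊗ₖ B ∈ U := by
    intro s hs
    have := mv (E s j) (E j k) hB
    rw [E_mul, E_mul, if_pos rfl, if_neg (fun h => hs h.symm)] at this
    simpa using this
  have hdiagkj : (E k k - E j j) ⊗ₖ B ∈ U := by
    have := mv (E k j) (E j k) hB
    rwa [E_mul, E_mul, if_pos rfl, if_pos rfl] at this
  have hkj : E k j ⊗ₖ B ∈ U := by
    have h := mv (E k j) (E k k - E j j) hdiagkj
    have e1 : E k j * (E k k - E j j) - (E k k - E j j) * E k j = (-2 : ℂ) • E k j := by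
      rw [Matrix.mul_sub, Matrix.sub_mul, E_mul, E_mul, E_mul, E_mul,
        if_neg hjk, if_pos rfl, if_pos rfl, if_neg hjk]
      ext x y; simp; ring
    rw [e1, Matrix.smul_kronecker] at h
    have := U.smul_mem (-2 : ℂ)⁻¹ h
    rwa [smul_smul, show ((-2:ℂ)⁻¹ * -2) = 1 by norm_num, one_smul] at this
  have hall : ∀ s t, s ≠ t → E s t ⊗ₖ B ∈ U := by
    intro s t hst
    by_cases hsj : s = j
    · rw [hsj]; exact h1 t (fun h => hst (by rw [hsj, h]))
    · by_cases hsk : s = k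
      · rw [hsk]
        have htk : t ≠ k := fun h => hst (by rw [hsk, h])
        by_cases htj : t = j
        · rw [htj]; exact hkj
        · have := mv (E j t) (E k j) hkj
          rw [E_mul, E_mul, if_neg htk, if_pos rfl] at this
          exact neg_tr _ this
      · by_cases htk : t = k
        · rw [htk]; exact h2 s hsk
        · have hsk' := h2 s hsk
          have := mv (E k t) (E s k) hsk'
          rw [E_mul, E_mul, if_neg (fun h => hst h.symm), if_pos rfl] at this
          exact neg_tr _ this
  have hdiag : ∀ s, s ≠ j → (E s s - E j j) ⊗ₖ B ∈ U := by
    intro s hs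
    have := mv (E s j) (E j s) (hall j s (fun h => hs h.symm))
    rwa [E_mul, E_mul, if_pos rfl, if_pos rfl] at this
  intro A hA
  have hsum : A ⊗ₖ B = ∑ s : Fin d, ∑ t : Fin d,
      (if s = t then A s s • ((E s s - E j j) ⊗ₖ B) else A s t • (E s t ⊗ₖ B)) := by
    have key : ∀ s : Fin d, (∑ t : Fin d,
        (if s = t then A s s • ((E s s - E j j) ⊗ₖ B) else A s t • (E s t ⊗ₖ B)))
        = (∑ t : Fin d, A s t • (E s t ⊗ₖ B)) - A s s • (E j j ⊗ₖ B) := by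
      intro s
      rw [Finset.sum_congr rfl (g := fun t =>
        (A s t • (E s t ⊗ₖ B)) - (if s = t then A s s • (E j j ⊗ₖ B) else 0))]
      · rw [Finset.sum_sub_distrib, Finset.sum_ite_eq Finset.univ s]
        simp
      · intro t _
        by_cases h : s = t
        · rw [if_pos h, if_pos h, ← h, sub_kron, smul_sub]
        · simp [h]
    rw [Finset.sum_congr rfl (fun s _ => key s), Finset.sum_sub_distrib, ← Finset.sum_smul]
    have htr : ∑ s : Fin d, A s s = 0 := by simpa [Matrix.trace, Matrix.diag] using hA
    rw [htr, zero_smul, sub_zero]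
    ext ⟨r,b⟩ ⟨s,e⟩
    simp [Matrix.sum_apply, kroneckerMap_apply, E_apply, ite_and, ite_mul, mul_ite,
      Finset.sum_ite_eq, Finset.sum_ite_eq']
  rw [hsum]
  refine Submodule.sum_mem U fun s _ => Submodule.sum_mem U fun t _ => ?_
  by_cases h : s = t
  · rw [if_pos h]
    by_cases hsj' : s = j
    · rw [hsj']; simp
    · exact U.smul_mem _ (hdiag s hsj')
  · rw [if_neg h]
    exact U.smul_mem _ (hall s t h)


include hU2 in
lemma gen_second {j k : Fin d} (hjk : j ≠ k) {A : M2 d} (hA : A ⊗ₖ E j k ∈ U) :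
    ∀ B : M2 d, B.trace = 0 → A ⊗ₖ B ∈ U := by
  have mv : ∀ (Y C : M2 d), A ⊗ₖ C ∈ U → A ⊗ₖ (Y*C - C*Y) ∈ U := by
    intro Y C h
    simpa [N2_kron] using hU2 Y _ h
  have neg_tr : ∀ C : M2 d, A ⊗ₖ (0 - C) ∈ U → A ⊗ₖ C ∈ U := by
    intro C h
    have := U.neg_mem h
    simpa [kron_sub, kron_neg] using this
  have h1 : ∀ t, t ≠ j → A ⊗ₖ E j t ∈ U := by
    intro t ht
    by_cases htk : t = k
    · rw [htk]; exact hA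
    · have := mv (E k t) (E j k) hA
      rw [E_mul, E_mul, if_neg ht, if_pos rfl] at this
      exact neg_tr _ this
  have h2 : ∀ s, s ≠ k → A ⊗ₖ E s k ∈ U := by
    intro s hs
    have := mv (E s j) (E j k) hA
    rw [E_mul, E_mul, if_pos rfl, if_neg (fun h => hs h.symm)] at this
    simpa using this
  have hdiagkj : A ⊗ₖ (E k k - E j j) ∈ U := by
    have := mv (E k j) (E j k) hA
    rwa [E_mul, E_mul, if_pos rfl, if_pos rfl] at this
  have hkj : A ⊗ₖ E k j ∈ U := by
    have h := mv (E k j) (E k k - E j j) hdiagkj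
    have e1 : E k j * (E k k - E j j) - (E k k - E j j) * E k j = (-2 : ℂ) • E k j := by
      rw [Matrix.mul_sub, Matrix.sub_mul, E_mul, E_mul, E_mul, E_mul,
        if_neg hjk, if_pos rfl, if_pos rfl, if_neg hjk]
      ext x y; simp; ring
    rw [e1, Matrix.kronecker_smul] at h
    have := U.smul_mem (-2 : ℂ)⁻¹ h
    rwa [smul_smul, show ((-2:ℂ)⁻¹ * -2) = 1 by norm_num, one_smul] at this
  have hall : ∀ s t, s ≠ t → A ⊗ₖ E s t ∈ U := by
    intro s t hst
    by_cases hsj : s = j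
    · rw [hsj]; exact h1 t (fun h => hst (by rw [hsj, h]))
    · by_cases hsk : s = k
      · rw [hsk]
        have htk : t ≠ k := fun h => hst (by rw [hsk, h])
        by_cases htj : t = j
        · rw [htj]; exact hkj
        · have := mv (E j t) (E k j) hkj
          rw [E_mul, E_mul, if_neg htk, if_pos rfl] at this
          exact neg_tr _ this
      · by_cases htk : t = k
        · rw [htk]; exact h2 s hsk
        · have hsk' := h2 s hsk
          have := mv (E k t) (E s k) hsk'
          rw [E_mul, E_mul, if_neg (fun h => hst h.symm), if_pos rfl] at this
          exact neg_tr _ this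
  have hdiag : ∀ s, s ≠ j → A ⊗ₖ (E s s - E j j) ∈ U := by
    intro s hs
    have := mv (E s j) (E j s) (hall j s (fun h => hs h.symm))
    rwa [E_mul, E_mul, if_pos rfl, if_pos rfl] at this
  intro B hB
  have hsum : A ⊗ₖ B = ∑ s : Fin d, ∑ t : Fin d,
      (if s = t then B s s • (A ⊗ₖ (E s s - E j j)) else B s t • (A ⊗ₖ E s t)) := by
    have key : ∀ s : Fin d, (∑ t : Fin d,
        (if s = t then B s s • (A ⊗ₖ (E s s - E j j)) else B s t • (A ⊗ₖ E s t)))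
        = (∑ t : Fin d, B s t • (A ⊗ₖ E s t)) - B s s • (A ⊗ₖ E j j) := by
      intro s
      rw [Finset.sum_congr rfl (g := fun t =>
        (B s t • (A ⊗ₖ E s t)) - (if s = t then B s s • (A ⊗ₖ E j j) else 0))]
      · rw [Finset.sum_sub_distrib, Finset.sum_ite_eq Finset.univ s]
        simp
      · intro t _
        by_cases h : s = t
        · rw [if_pos h, if_pos h, ← h, kron_sub, smul_sub]
        · simp [h]
    rw [Finset.sum_congr rfl (fun s _ => key s), Finset.sum_sub_distrib, ← Finset.sum_smul]
    have htr : ∑ s : Fin d, B s s = 0 := by simpa [Matrix.trace, Matrix.diag] using hB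
    rw [htr, zero_smul, sub_zero]
    ext ⟨r,b⟩ ⟨s,e⟩
    simp [Matrix.sum_apply, kroneckerMap_apply, E_apply, ite_and, ite_mul, mul_ite,
      Finset.sum_ite_eq, Finset.sum_ite_eq', mul_comm]
  rw [hsum]
  refine Submodule.sum_mem U fun s _ => Submodule.sum_mem U fun t _ => ?_
  by_cases h : s = t
  · rw [if_pos h]
    by_cases hsj' : s = j
    · rw [hsj']; simp
    · exact U.smul_mem _ (hdiag s hsj')
  · rw [if_neg h]
    exact U.smul_mem _ (hall s t h)


include hU1 in
lemma f1keep_mem {u : M4 d} (hu : u ∈ U) (j : Fin d) : f1keep j u ∈ U :=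
  U.smul_mem _ (U.add_mem (hU1 _ _ (hU1 _ _ hu)) (hU1 _ _ hu))
include hU1 in
lemma f1drop_mem {u : M4 d} (hu : u ∈ U) (k : Fin d) : f1drop k u ∈ U :=
  U.smul_mem _ (U.sub_mem (hU1 _ _ (hU1 _ _ hu)) (hU1 _ _ hu))
include hU2 in
lemma f2keep_mem {u : M4 d} (hu : u ∈ U) (j : Fin d) : f2keep j u ∈ U :=
  U.smul_mem _ (U.add_mem (hU2 _ _ (hU2 _ _ hu)) (hU2 _ _ hu))
include hU2 in
lemma f2drop_mem {u : M4 d} (hu : u ∈ U) (k : Fin d) : f2drop k u ∈ U :=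
  U.smul_mem _ (U.sub_mem (hU2 _ _ (hU2 _ _ hu)) (hU2 _ _ hu))

include hU1 in
lemma extract_block {u : M4 d} (hu : u ∈ U) {a c : Fin d} (hac : a ≠ c) :
    E a c ⊗ₖ blk u a c ∈ U := by
  have hid : E a c ⊗ₖ blk u a c = f1keep a (f1drop c u) := by
    ext ⟨r,b⟩ ⟨s,e⟩
    rw [f1keep_apply, f1drop_apply]
    simp only [kroneckerMap_apply, E_apply, blk_apply, ite_mul, one_mul, zero_mul]
    by_cases h1 : a = r <;> by_cases h2 : c = s <;>
      simp [h1, h2, hac, Ne.symm hac] <;> simp_all [eq_comm]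
  rw [hid]
  exact f1keep_mem U hU1 (f1drop_mem U hU1 hu c) a

include hU1 hU2 in
lemma extract_entry {u : M4 d} (hu : u ∈ U) {j k b e : Fin d} (hjk : j ≠ k) (hbe : b ≠ e) :
    u (j,b) (k,e) • (E j k ⊗ₖ E b e) ∈ U := by
  have hid : u (j,b) (k,e) • (E j k ⊗ₖ E b e) = f2keep b (f2drop e (f1keep j (f1drop k u))) := by
    ext ⟨r,q⟩ ⟨s,t⟩
    rw [f2keep_apply, f2drop_apply, f1keep_apply, f1drop_apply]
    simp only [Matrix.smul_apply, kroneckerMap_apply, E_apply, smul_eq_mul, ite_mul, mul_ite,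
      one_mul, zero_mul, mul_one, mul_zero]
    by_cases h1 : j = r <;> by_cases h2 : k = s <;> by_cases h3 : b = q <;> by_cases h4 : e = t <;>
      simp [h1, h2, h3, h4, hjk, hbe, Ne.symm hjk, Ne.symm hbe] <;> simp_all [eq_comm]
  rw [hid]
  exact f2keep_mem U hU2 (f2drop_mem U hU2 (f1keep_mem U hU1 (f1drop_mem U hU1 hu k) j) e) b

lemma blockdiag_move {u : M4 d} {a a' : Fin d} (ha : a' ≠ a)
    (hdg : ∀ r s, r ≠ s → blk u r s = 0) :
    N1 (E a' a) u = E a' a ⊗ₖ (blk u a a - blk u a' a') := by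
  have hdg' : ∀ r s b e, r ≠ s → u (r,b) (s,e) = 0 := by
    intro r s b e hrs
    have := hdg r s hrs
    have : blk u r s b e = (0 : M2 d) b e := by rw [this]
    simpa [blk_apply] using this
  ext ⟨r,b⟩ ⟨s,e⟩
  rw [N1_apply]
  simp only [kroneckerMap_apply, E_apply, Matrix.sub_apply, blk_apply, ite_mul, mul_ite,
    one_mul, zero_mul, mul_one, mul_zero, Finset.sum_ite_eq, Finset.sum_ite_eq',
    Finset.mem_univ, if_true]
  by_cases h1 : a' = r <;> by_cases h2 : a = s <;> simp [h1, h2, ite_and]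
  · exact hdg' a s b e h2
  · exact hdg' r a' b e (fun h => h1 h.symm)

lemma blk_trace (u : M4 d) (a c : Fin d) : (blk u a c).trace = pt2 u a c := by
  simp [Matrix.trace, Matrix.diag, blk_apply, pt2_apply]

lemma sum_blk (u : M4 d) : ∑ a, blk u a a = pt1 u := by
  ext b e; simp [Matrix.sum_apply, blk_apply, pt1_apply]

lemma diag_move {B : M2 d} (hdg : ∀ x y, x ≠ y → B x y = 0) (b b' : Fin d) (hbb : b' ≠ b) :
    E b' b * B - B * E b' b = (B b b - B b' b') • E b' b := by
  ext x y
  simp only [Matrix.sub_apply, mul_apply, Matrix.smul_apply, E_apply, smul_eq_mul, ite_and, ite_mul,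
    mul_ite, one_mul, zero_mul, mul_one, mul_zero, Finset.sum_ite_eq, Finset.sum_ite_eq',
    Finset.mem_univ, if_true]
  by_cases h1 : b' = x <;> by_cases h2 : b = y <;> simp [h1, h2]
  · exact hdg b y (fun h => h2 h)
  · exact hdg x b' (fun h => h1 h.symm)

include hU1 hU2 in
lemma get_unit (hd : 2 ≤ d) {u : M4 d} (hu : u ∈ U) (hne : u ≠ 0)
    (hp1 : pt1 u = 0) (hp2 : pt2 u = 0) :
    ∃ j k b e : Fin d, j ≠ k ∧ b ≠ e ∧ E j k ⊗ₖ E b e ∈ U := by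
  haveI : NeZero d := ⟨by omega⟩
  have hdC : (d : ℂ) ≠ 0 := by
    exact Nat.cast_ne_zero.mpr (by omega : d ≠ 0)
  -- Step 1 : find an off-diagonal block
  have step1 : ∃ j k : Fin d, j ≠ k ∧ ∃ B : M2 d, B ≠ 0 ∧ B.trace = 0 ∧ E j k ⊗ₖ B ∈ U := by
    by_cases hoff : ∃ a c, a ≠ c ∧ blk u a c ≠ 0
    · obtain ⟨a, c, hac, hblk⟩ := hoff
      exact ⟨a, c, hac, blk u a c, hblk, by rw [blk_trace, hp2]; rfl,
        extract_block U hU1 hu hac⟩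
    · push_neg at hoff
      have hdgblk : ∀ r s, r ≠ s → blk u r s = 0 := hoff
      have hne2 : ∃ a a', a' ≠ a ∧ blk u a a ≠ blk u a' a' := by
        by_contra hcon
        push_neg at hcon
        have hall : ∀ a a' : Fin d, blk u a a = blk u a' a' := by
          intro a a'
          by_cases h : a' = a
          · rw [h]
          · exact hcon a a' h
        set a₀ : Fin d := ⟨0, by omega⟩
        have hs : ∑ a : Fin d, blk u a a = 0 := by rw [sum_blk, hp1]
        rw [Finset.sum_congr rfl (fun a _ => hall a a₀), Finset.sum_const] at hs
        have hblk0 : blk u a₀ a₀ = 0 := by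
          ext b e
          have := congrFun (congrFun hs b) e
          simp only [Matrix.smul_apply, Finset.card_univ, Fintype.card_fin, Matrix.zero_apply] at this
          have : (d : ℂ) * blk u a₀ a₀ b e = 0 := by
            simpa [nsmul_eq_mul] using this
          exact (mul_eq_zero.mp this).resolve_left hdC
        apply hne
        ext ⟨a, b⟩ ⟨c, e⟩
        by_cases h : a = c
        · subst h
          have : blk u a a = 0 := (hall a a₀).trans hblk0
          simpa [blk_apply] using congrFun (congrFun this b) e
        · simpa [blk_apply] using congrFun (congrFun (hdgblk a c h) b) e
      obtain ⟨a, a', ha, hblkne⟩ := hne2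
      refine ⟨a', a, ha, blk u a a - blk u a' a', sub_ne_zero.mpr hblkne, ?_, ?_⟩
      · rw [Matrix.trace_sub, blk_trace, blk_trace, hp2]; simp
      · have := hU1 (E a' a) u hu
        rwa [blockdiag_move ha hdgblk] at this
  obtain ⟨j, k, hjk, B, hBne, hBtr, hB⟩ := step1
  -- Step 2 : find an off-diagonal entry of B
  by_cases hoffB : ∃ b e, b ≠ e ∧ B b e ≠ 0
  · obtain ⟨b, e, hbe, hBbe⟩ := hoffB
    refine ⟨j, k, b, e, hjk, hbe, ?_⟩
    have hmem := extract_entry U hU1 hU2 hB hjk hbe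
    have hval : (E j k ⊗ₖ B) (j, b) (k, e) = B b e := by
      simp [kroneckerMap_apply, E_apply]
    rw [hval] at hmem
    have := U.smul_mem (B b e)⁻¹ hmem
    rwa [smul_smul, inv_mul_cancel₀ hBbe, one_smul] at this
  · push_neg at hoffB
    have hBd : ∃ b b', b' ≠ b ∧ B b b ≠ B b' b' := by
      by_contra hcon
      push_neg at hcon
      have hall : ∀ b b' : Fin d, B b b = B b' b' := by
        intro b b'
        by_cases h : b' = b
        · rw [h]
        · exact hcon b b' h
      set b₀ : Fin d := ⟨0, by omega⟩
      have hs : B.trace = ∑ b : Fin d, B b₀ b₀ :=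
        Finset.sum_congr rfl (fun b _ => hall b b₀)
      rw [hBtr, Finset.sum_const, Finset.card_univ, Fintype.card_fin] at hs
      have hb0 : B b₀ b₀ = 0 := by
        have : (d : ℂ) * B b₀ b₀ = 0 := by simpa [nsmul_eq_mul] using hs.symm
        exact (mul_eq_zero.mp this).resolve_left hdC
      apply hBne
      ext x y
      by_cases h : x = y
      · subst h; rw [(hall x b₀).trans hb0]; rfl
      · rw [hoffB x y h]; rfl
    obtain ⟨b, b', hbb, hBdne⟩ := hBd
    refine ⟨j, k, b', b, hjk, hbb, ?_⟩
    have hmem := hU2 (E b' b) _ hB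
    rw [N2_kron, diag_move hoffB b b' hbb, Matrix.kronecker_smul] at hmem
    have := U.smul_mem (B b b - B b' b')⁻¹ hmem
    rwa [smul_smul, inv_mul_cancel₀ (sub_ne_zero.mpr hBdne), one_smul] at this

include hU1 hU2 in
lemma irr (hd : 2 ≤ d) {u : M4 d} (hu : u ∈ U) (hne : u ≠ 0)
    (hp1 : pt1 u = 0) (hp2 : pt2 u = 0) :
    ∀ W : M4 d, pt1 W = 0 → pt2 W = 0 → W ∈ U := by
  obtain ⟨j, k, b, e, hjk, hbe, hunit⟩ := get_unit U hU1 hU2 hd hu hne hp1 hp2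
  have hAB : ∀ A B : M2 d, A.trace = 0 → B.trace = 0 → A ⊗ₖ B ∈ U :=
    fun A B hA hB => gen_first U hU1 hjk (gen_second U hU2 hbe hunit B hB) A hA
  intro W h1 h2
  have hdC : (d : ℂ) ≠ 0 := by exact Nat.cast_ne_zero.mpr (by omega : d ≠ 0)
  have hdec : W = ∑ a : Fin d, ∑ c : Fin d,
      ((E a c - (if a = c then ((d:ℂ)⁻¹) • (1 : M2 d) else 0)) ⊗ₖ blk W a c) := by
    ext ⟨r, q⟩ ⟨s, t⟩
    have hterm : ∀ a c : Fin d,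
        ((E a c - (if a = c then ((d:ℂ)⁻¹) • (1 : M2 d) else 0)) ⊗ₖ blk W a c) (r,q) (s,t)
          = (if a = r then (if c = s then W (a,q) (c,t) else 0) else 0)
            - (if a = c then (if r = s then (d:ℂ)⁻¹ * W (a,q) (c,t) else 0) else 0) := by
      intro a c
      by_cases hac : a = c <;> by_cases hrs : r = s <;>
        by_cases har : a = r <;> by_cases hcs : c = s <;>
        simp_all [kroneckerMap_apply, Matrix.sub_apply, E_apply, Matrix.one_apply, blk_apply,
          ite_and, sub_mul, Matrix.smul_apply, smul_eq_mul] <;> ring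
    simp only [Matrix.sum_apply, hterm, Finset.sum_sub_distrib, Finset.sum_ite_eq,
      Finset.sum_ite_eq', Finset.mem_univ, if_true]
    by_cases hrs : r = s
    · simp only [hrs, if_true]
      rw [← Finset.mul_sum]
      have hz : ∑ a : Fin d, W (a, q) (a, t) = 0 := by
        have := congrFun (congrFun h1 q) t
        simpa [pt1_apply] using this
      rw [hz, mul_zero, sub_zero]
      simp [Finset.sum_ite_eq', hrs]
    · simp [hrs]
  rw [hdec]
  refine Submodule.sum_mem U fun a _ => Submodule.sum_mem U fun c _ => ?_
  apply hAB
  · by_cases hac : a = c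
    · rw [if_pos hac, Matrix.trace_sub, Matrix.trace_smul, Matrix.trace_one, E_trace,
        if_pos hac]
      simp [inv_mul_cancel₀ hdC, Fintype.card_fin]
    · rw [if_neg hac, sub_zero, E_trace, if_neg hac]
  · rw [blk_trace, h2]; rfl

end Gen

lemma pt1_N1_zero (A : M2 d) (u : M4 d) : pt1 (N1 A u) = 0 := by
  ext b e
  simp only [pt1_apply, N1_apply, Matrix.zero_apply, Finset.sum_sub_distrib]
  rw [sub_eq_zero, Finset.sum_comm]
  exact Finset.sum_congr rfl fun p _ => Finset.sum_congr rfl fun x _ => (mul_comm _ _).symm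
lemma pt2_N2_zero (A : M2 d) (u : M4 d) : pt2 (N2 A u) = 0 := by
  ext a c
  simp only [pt2_apply, N2_apply, Matrix.zero_apply, Finset.sum_sub_distrib]
  rw [sub_eq_zero, Finset.sum_comm]
  exact Finset.sum_congr rfl fun p _ => Finset.sum_congr rfl fun x _ => (mul_comm _ _).symm
lemma pt2_N1 (A : M2 d) (u : M4 d) : pt2 (N1 A u) = A * pt2 u - pt2 u * A := by
  ext a c
  simp only [pt2_apply, N1_apply, Matrix.sub_apply, mul_apply, Finset.sum_sub_distrib,
    Finset.mul_sum, Finset.sum_mul]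
  congr 1 <;> exact Finset.sum_comm
lemma pt1_N2 (A : M2 d) (u : M4 d) : pt1 (N2 A u) = A * pt1 u - pt1 u * A := by
  ext b e
  simp only [pt1_apply, N2_apply, Matrix.sub_apply, mul_apply, Finset.sum_sub_distrib,
    Finset.mul_sum, Finset.sum_mul]
  congr 1 <;> exact Finset.sum_comm

lemma pt1_sub (u v : M4 d) : pt1 (u - v) = pt1 u - pt1 v := by
  ext b e; simp [pt1_apply, Finset.sum_sub_distrib]
lemma pt2_sub (u v : M4 d) : pt2 (u - v) = pt2 u - pt2 v := by
  ext a c; simp [pt2_apply, Finset.sum_sub_distrib]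
lemma pt1_add (u v : M4 d) : pt1 (u + v) = pt1 u + pt1 v := by
  ext b e; simp [pt1_apply, Finset.sum_add_distrib]
lemma pt2_add (u v : M4 d) : pt2 (u + v) = pt2 u + pt2 v := by
  ext a c; simp [pt2_apply, Finset.sum_add_distrib]

lemma pt1_kron_one (X : M2 d) : pt1 (X ⊗ₖ (1 : M2 d)) = X.trace • (1 : M2 d) := by
  ext b e
  simp [pt1_apply, kroneckerMap_apply, Matrix.one_apply, Matrix.trace, Matrix.diag,
    Finset.sum_mul, mul_ite, Matrix.smul_apply, smul_eq_mul]
lemma pt1_one_kron (Y : M2 d) : pt1 ((1 : M2 d) ⊗ₖ Y) = (d : ℂ) • Y := by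
  ext b e
  simp [pt1_apply, kroneckerMap_apply, Matrix.one_apply, ite_mul, Matrix.smul_apply, smul_eq_mul,
    Finset.sum_ite_eq, mul_comm]
lemma pt2_kron_one (X : M2 d) : pt2 (X ⊗ₖ (1 : M2 d)) = (d : ℂ) • X := by
  ext a c
  simp [pt2_apply, kroneckerMap_apply, Matrix.one_apply, mul_ite, Matrix.smul_apply, smul_eq_mul,
    mul_comm]
lemma pt2_one_kron (Y : M2 d) : pt2 ((1 : M2 d) ⊗ₖ Y) = Y.trace • (1 : M2 d) := by
  ext a c
  simp [pt2_apply, kroneckerMap_apply, Matrix.one_apply, ite_mul, Matrix.trace, Matrix.diag,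
    Matrix.smul_apply, smul_eq_mul]

lemma trace_pt1 (W : M4 d) : (pt1 W).trace = W.trace := by
  simp only [Matrix.trace, Matrix.diag, pt1_apply]
  rw [Fintype.sum_prod_type]
  exact Finset.sum_comm
lemma trace_pt2 (W : M4 d) : (pt2 W).trace = W.trace := by
  simp only [Matrix.trace, Matrix.diag, pt2_apply]
  rw [Fintype.sum_prod_type]

lemma pt1_conjT (W : M4 d) : pt1 (Wᴴ) = (pt1 W)ᴴ := by
  ext b e
  simp [pt1_apply, conjTranspose_apply]
lemma pt2_conjT (W : M4 d) : pt2 (Wᴴ) = (pt2 W)ᴴ := by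
  ext a c
  simp [pt2_apply, conjTranspose_apply]

lemma kron_conjT (A B : M2 d) : (A ⊗ₖ B)ᴴ = Aᴴ ⊗ₖ Bᴴ := by
  ext ⟨a,b⟩ ⟨c,e⟩
  simp [conjTranspose_apply, kroneckerMap_apply]

lemma pt1_neg (W : M4 d) : pt1 (-W) = -pt1 W := by
  ext b e; simp [pt1_apply]
lemma pt2_neg (W : M4 d) : pt2 (-W) = -pt2 W := by
  ext a c; simp [pt2_apply]

lemma decomp (hd : 2 ≤ d) (W : M4 d) (hW : Wᴴ = -W) :
    ∃ X Y : M2 d, Xᴴ = -X ∧ Yᴴ = -Y ∧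
      pt1 (W - (X ⊗ₖ (1 : M2 d) + (1 : M2 d) ⊗ₖ Y)) = 0 ∧
      pt2 (W - (X ⊗ₖ (1 : M2 d) + (1 : M2 d) ⊗ₖ Y)) = 0 := by
  have hdC : (d : ℂ) ≠ 0 := by exact Nat.cast_ne_zero.mpr (by omega : d ≠ 0)
  set τ : ℂ := W.trace with hτdef
  set α : ℂ := τ / (2*d) with hαdef
  have hτ : (starRingEnd ℂ) τ = -τ := by
    have h1 : (Wᴴ).trace = (starRingEnd ℂ) τ := by
      rw [Matrix.trace_conjTranspose]; rfl
    rw [hW, Matrix.trace_neg] at h1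
    exact h1.symm
  have hα : (starRingEnd ℂ) α = -α := by
    rw [hαdef, map_div₀, hτ, show (starRingEnd ℂ) (2 * (d:ℂ)) = 2 * d by simp [_root_.map_mul, Complex.conj_natCast, Complex.conj_ofNat]]
    exact neg_div _ _
  have hp2W : (pt2 W)ᴴ = -pt2 W := by
    rw [← pt2_conjT, hW, pt2_neg]
  have hp1W : (pt1 W)ᴴ = -pt1 W := by
    rw [← pt1_conjT, hW, pt1_neg]
  set X : M2 d := (d:ℂ)⁻¹ • (pt2 W - α • (1 : M2 d)) with hXdef
  set Y : M2 d := (d:ℂ)⁻¹ • (pt1 W - α • (1 : M2 d)) with hYdef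
  have hXskew : Xᴴ = -X := by
    rw [hXdef, Matrix.conjTranspose_smul, Matrix.conjTranspose_sub, Matrix.conjTranspose_smul,
      Matrix.conjTranspose_one, hp2W, show star α = -α from hα,
      show star ((d:ℂ)⁻¹) = (d:ℂ)⁻¹ by simp]
    simp [smul_sub]
    abel
  have hYskew : Yᴴ = -Y := by
    rw [hYdef, Matrix.conjTranspose_smul, Matrix.conjTranspose_sub, Matrix.conjTranspose_smul,
      Matrix.conjTranspose_one, hp1W, show star α = -α from hα,
      show star ((d:ℂ)⁻¹) = (d:ℂ)⁻¹ by simp]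
    simp [smul_sub]
    abel
  have htr1 : (1 : M2 d).trace = (d : ℂ) := by
    simp [Matrix.trace_one]
  have hXtr : X.trace = α := by
    rw [hXdef, Matrix.trace_smul, Matrix.trace_sub, trace_pt2, Matrix.trace_smul, htr1,
      ← hτdef, hαdef]
    field_simp
    linear_combination (τ - τ*(d:ℂ)*(d:ℂ)⁻¹) * mul_inv_cancel₀ hdC
  have hYtr : Y.trace = α := by
    rw [hYdef, Matrix.trace_smul, Matrix.trace_sub, trace_pt1, Matrix.trace_smul, htr1,
      ← hτdef, hαdef]
    field_simp
    linear_combination (τ - τ*(d:ℂ)*(d:ℂ)⁻¹) * mul_inv_cancel₀ hdC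
  have hdX : (d:ℂ) • X = pt2 W - α • (1 : M2 d) := by
    rw [hXdef, smul_smul, mul_inv_cancel₀ hdC, one_smul]
  have hdY : (d:ℂ) • Y = pt1 W - α • (1 : M2 d) := by
    rw [hYdef, smul_smul, mul_inv_cancel₀ hdC, one_smul]
  refine ⟨X, Y, hXskew, hYskew, ?_, ?_⟩
  · rw [pt1_sub, pt1_add, pt1_kron_one, pt1_one_kron, hXtr, hdY]
    abel
  · rw [pt2_sub, pt2_add, pt2_kron_one, pt2_one_kron, hYtr, hdX]
    abel

lemma kron_zero_right (A : M2 d) : A ⊗ₖ (0 : M2 d) = 0 := by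
  ext ⟨a,b⟩ ⟨c,e⟩; simp [kroneckerMap_apply]
lemma kron_zero_left (A : M2 d) : (0 : M2 d) ⊗ₖ A = 0 := by
  ext ⟨a,b⟩ ⟨c,e⟩; simp [kroneckerMap_apply]

lemma N1_zero (A : M2 d) : N1 A (0 : M4 d) = 0 := by simp [N1]
lemma N2_zero (A : M2 d) : N2 A (0 : M4 d) = 0 := by simp [N2]
lemma N1_add (A : M2 d) (u v : M4 d) : N1 A (u + v) = N1 A u + N1 A v := by
  simp only [N1, Matrix.mul_add, Matrix.add_mul]; abel
lemma N2_add (A : M2 d) (u v : M4 d) : N2 A (u + v) = N2 A u + N2 A v := by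
  simp only [N2, Matrix.mul_add, Matrix.add_mul]; abel
lemma N1_smul (A : M2 d) (c : ℂ) (u : M4 d) : N1 A (c • u) = c • N1 A u := by
  simp only [N1, Matrix.mul_smul, Matrix.smul_mul, smul_sub]
lemma N2_smul (A : M2 d) (c : ℂ) (u : M4 d) : N2 A (c • u) = c • N2 A u := by
  simp only [N2, Matrix.mul_smul, Matrix.smul_mul, smul_sub]
lemma N1_addA (A B : M2 d) (u : M4 d) : N1 (A + B) u = N1 A u + N1 B u := by
  simp only [N1, Matrix.add_kronecker, Matrix.add_mul, Matrix.mul_add]; abel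
lemma N2_addA (A B : M2 d) (u : M4 d) : N2 (A + B) u = N2 A u + N2 B u := by
  simp only [N2, Matrix.kronecker_add, Matrix.add_mul, Matrix.mul_add]; abel
lemma N1_smulA (A : M2 d) (c : ℂ) (u : M4 d) : N1 (c • A) u = c • N1 A u := by
  simp only [N1, Matrix.smul_kronecker, Matrix.mul_smul, Matrix.smul_mul, smul_sub]
lemma N2_smulA (A : M2 d) (c : ℂ) (u : M4 d) : N2 (c • A) u = c • N2 A u := by
  simp only [N2, Matrix.kronecker_smul, Matrix.mul_smul, Matrix.smul_mul, smul_sub]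

end
end Stmt13

open Stmt13 in
/-- There is no Lie subalgebra of `𝔤 = 𝔲(d²)` strictly between
`𝔥 = {X⊗I + I⊗Y : X,Y ∈ 𝔲(d)}` and `𝔤`. -/
theorem stmt13 {d : ℕ} (hd : 2 ≤ d)
    (z : Submodule ℝ (Matrix (Fin d × Fin d) (Fin d × Fin d) ℂ))
    (hbracket : ∀ a ∈ z, ∀ b ∈ z, a * b - b * a ∈ z)
    (hlow : {W : Matrix (Fin d × Fin d) (Fin d × Fin d) ℂ |
        ∃ X Y : Matrix (Fin d) (Fin d) ℂ, Xᴴ = -X ∧ Yᴴ = -Y ∧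
          W = X ⊗ₖ (1 : Matrix (Fin d) (Fin d) ℂ) + (1 : Matrix (Fin d) (Fin d) ℂ) ⊗ₖ Y}
      ⊆ (z : Set (Matrix (Fin d × Fin d) (Fin d × Fin d) ℂ)))
    (hup : (z : Set (Matrix (Fin d × Fin d) (Fin d × Fin d) ℂ))
      ⊆ {W : Matrix (Fin d × Fin d) (Fin d × Fin d) ℂ | Wᴴ = -W}) :
    (z : Set (Matrix (Fin d × Fin d) (Fin d × Fin d) ℂ)) =
      {W : Matrix (Fin d × Fin d) (Fin d × Fin d) ℂ |
        ∃ X Y : Matrix (Fin d) (Fin d) ℂ, Xᴴ = -X ∧ Yᴴ = -Y ∧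
          W = X ⊗ₖ (1 : Matrix (Fin d) (Fin d) ℂ) + (1 : Matrix (Fin d) (Fin d) ℂ) ⊗ₖ Y} ∨
    (z : Set (Matrix (Fin d × Fin d) (Fin d × Fin d) ℂ)) =
      {W : Matrix (Fin d × Fin d) (Fin d × Fin d) ℂ | Wᴴ = -W} := by
  classical
  by_cases hsub : (z : Set (Matrix (Fin d × Fin d) (Fin d × Fin d) ℂ)) ⊆
      {W : Matrix (Fin d × Fin d) (Fin d × Fin d) ℂ |
        ∃ X Y : Matrix (Fin d) (Fin d) ℂ, Xᴴ = -X ∧ Yᴴ = -Y ∧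
          W = X ⊗ₖ (1 : Matrix (Fin d) (Fin d) ℂ) + (1 : Matrix (Fin d) (Fin d) ℂ) ⊗ₖ Y}
  · exact Or.inl (Set.Subset.antisymm hsub hlow)
  right
  obtain ⟨w, hwz, hwh⟩ := Set.not_subset.mp hsub
  set S : Set (M4 d) := {v : M4 d | v ∈ z ∧ pt1 v = 0 ∧ pt2 v = 0} with hSdef
  set U : Submodule ℂ (M4 d) := Submodule.span ℂ S with hUdef
  -- membership of one-sided generators in z
  have hXk : ∀ X : M2 d, Xᴴ = -X → (X ⊗ₖ (1 : M2 d)) ∈ z := by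
    intro X hX
    have := hlow ⟨X, 0, hX, by simp, by rw [kron_zero_right, add_zero]⟩
    exact this
  have hYk : ∀ Y : M2 d, Yᴴ = -Y → ((1 : M2 d) ⊗ₖ Y) ∈ z := by
    intro Y hY
    have := hlow ⟨0, Y, by simp, hY, by rw [kron_zero_left, zero_add]⟩
    exact this
  -- S is stable under skew one-sided commutators
  have hS1 : ∀ X : M2 d, Xᴴ = -X → ∀ v ∈ S, N1 X v ∈ S := by
    rintro X hX v ⟨hvz, hv1, hv2⟩
    refine ⟨hbracket _ (hXk X hX) _ hvz, by rw [pt1_N1_zero], by rw [pt2_N1, hv2]; simp⟩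
  have hS2 : ∀ Y : M2 d, Yᴴ = -Y → ∀ v ∈ S, N2 Y v ∈ S := by
    rintro Y hY v ⟨hvz, hv1, hv2⟩
    refine ⟨hbracket _ (hYk Y hY) _ hvz, by rw [pt1_N2, hv1]; simp, by rw [pt2_N2_zero]⟩
  have hU1skew : ∀ X : M2 d, Xᴴ = -X → ∀ u ∈ U, N1 X u ∈ U := by
    intro X hX u hu
    induction hu using Submodule.span_induction with
    | mem x hx => exact Submodule.subset_span (hS1 X hX x hx)
    | zero => rw [N1_zero]; exact U.zero_mem
    | add x y hx hy ihx ihy => rw [N1_add]; exact U.add_mem ihx ihy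
    | smul c x hx ih => rw [N1_smul]; exact U.smul_mem c ih
  have hU2skew : ∀ Y : M2 d, Yᴴ = -Y → ∀ u ∈ U, N2 Y u ∈ U := by
    intro Y hY u hu
    induction hu using Submodule.span_induction with
    | mem x hx => exact Submodule.subset_span (hS2 Y hY x hx)
    | zero => rw [N2_zero]; exact U.zero_mem
    | add x y hx hy ihx ihy => rw [N2_add]; exact U.add_mem ihx ihy
    | smul c x hx ih => rw [N2_smul]; exact U.smul_mem c ih
  -- decompose arbitrary A into skew pieces
  have hdecA : ∀ A : M2 d, ∃ X₁ X₂ : M2 d, X₁ᴴ = -X₁ ∧ X₂ᴴ = -X₂ ∧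
      A = X₁ + (-Complex.I) • X₂ := by
    intro A
    refine ⟨(2:ℂ)⁻¹ • (A - Aᴴ), (Complex.I * 2⁻¹) • (A + Aᴴ), ?_, ?_, ?_⟩
    · rw [Matrix.conjTranspose_smul, Matrix.conjTranspose_sub, Matrix.conjTranspose_conjTranspose]
      rw [show star ((2:ℂ)⁻¹) = (2:ℂ)⁻¹ by norm_num]
      rw [smul_sub, smul_sub, neg_sub]
    · rw [Matrix.conjTranspose_smul, Matrix.conjTranspose_add, Matrix.conjTranspose_conjTranspose]
      rw [show star (Complex.I * 2⁻¹) = -(Complex.I * 2⁻¹) by simp [Complex.star_def, Complex.conj_I]]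
      rw [neg_smul, add_comm Aᴴ A]
    · rw [smul_smul, show (-Complex.I) * (Complex.I * 2⁻¹) = (2:ℂ)⁻¹ by
        rw [neg_mul, ← mul_assoc, Complex.I_mul_I]; ring]
      ext i j
      simp [smul_sub, smul_add, Matrix.sub_apply, Matrix.add_apply, Matrix.smul_apply, smul_eq_mul]
      ring
  have hU1 : ∀ A : M2 d, ∀ u ∈ U, N1 A u ∈ U := by
    intro A u hu
    obtain ⟨X₁, X₂, h1, h2, hA⟩ := hdecA A
    rw [hA, N1_addA, N1_smulA]
    exact U.add_mem (hU1skew X₁ h1 u hu) (U.smul_mem _ (hU1skew X₂ h2 u hu))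
  have hU2 : ∀ A : M2 d, ∀ u ∈ U, N2 A u ∈ U := by
    intro A u hu
    obtain ⟨X₁, X₂, h1, h2, hA⟩ := hdecA A
    rw [hA, N2_addA, N2_smulA]
    exact U.add_mem (hU2skew X₁ h1 u hu) (U.smul_mem _ (hU2skew X₂ h2 u hu))
  -- the element u₀
  have hwskew : wᴴ = -w := hup hwz
  obtain ⟨X, Y, hXs, hYs, hq1, hq2⟩ := decomp hd w hwskew
  have hh₀z : (X ⊗ₖ (1 : M2 d) + (1 : M2 d) ⊗ₖ Y) ∈ z := hlow ⟨X, Y, hXs, hYs, rfl⟩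
  set u₀ : M4 d := w - (X ⊗ₖ (1 : M2 d) + (1 : M2 d) ⊗ₖ Y) with hu₀def
  have hu₀z : u₀ ∈ z := z.sub_mem hwz hh₀z
  have hu₀S : u₀ ∈ S := ⟨hu₀z, hq1, hq2⟩
  have hu₀ne : u₀ ≠ 0 := by
    intro h
    apply hwh
    rw [hu₀def, sub_eq_zero] at h
    exact ⟨X, Y, hXs, hYs, h⟩
  have hm := irr U hU1 hU2 hd (Submodule.subset_span hu₀S) hu₀ne hq1 hq2
  -- realification : every element of U gives back elements of z
  have hreal : ∀ u ∈ U, (2:ℂ)⁻¹ • (u + -uᴴ) ∈ z ∧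
      (2:ℂ)⁻¹ • (Complex.I • u + -(Complex.I • u)ᴴ) ∈ z := by
    intro u hu
    induction hu using Submodule.span_induction with
    | mem x hx =>
      have hxz := hx.1
      have hxs : xᴴ = -x := hup hxz
      constructor
      · have hxx : (2:ℂ)⁻¹ • (x + -xᴴ) = x := by
          rw [hxs, neg_neg, ← two_smul ℂ, smul_smul]
          norm_num
        rw [hxx]; exact hxz
      · have hxsij : ∀ i j, star (x j i) = -(x i j) := fun i j => by
          have := congrFun (congrFun hxs i) j
          simpa [Matrix.conjTranspose_apply] using this
        have hxx : (2:ℂ)⁻¹ • (Complex.I • x + -(Complex.I • x)ᴴ) = 0 := by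
          ext i j
          simp [Matrix.conjTranspose_apply, Matrix.smul_apply, star_mul', Complex.star_def,
            Complex.conj_I, hxsij]
        rw [hxx]; exact z.zero_mem
    | zero => constructor <;> simp [z.zero_mem]
    | add x y hx hy ihx ihy =>
      constructor
      · have e1 : (2:ℂ)⁻¹ • ((x + y) + -(x + y)ᴴ)
            = (2:ℂ)⁻¹ • (x + -xᴴ) + (2:ℂ)⁻¹ • (y + -yᴴ) := by
          ext i j
          simp [Matrix.smul_apply, Matrix.add_apply, Matrix.neg_apply,
            Matrix.conjTranspose_apply, smul_eq_mul, star_add]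
          ring
        rw [e1]; exact z.add_mem ihx.1 ihy.1
      · have e2 : (2:ℂ)⁻¹ • (Complex.I • (x + y) + -(Complex.I • (x + y))ᴴ)
            = (2:ℂ)⁻¹ • (Complex.I • x + -(Complex.I • x)ᴴ)
              + (2:ℂ)⁻¹ • (Complex.I • y + -(Complex.I • y)ᴴ) := by
          ext i j
          simp [Matrix.smul_apply, Matrix.add_apply, Matrix.neg_apply,
            Matrix.conjTranspose_apply, smul_eq_mul, star_add, star_mul', Complex.star_def,
            Complex.conj_I]
          ring
        rw [e2]; exact z.add_mem ihx.2 ihy.2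
    | smul c x hx ih =>
      have hcre : ((c.re : ℂ)) • ((2:ℂ)⁻¹ • (x + -xᴴ)) ∈ z := by
        rw [show ((c.re : ℂ)) = algebraMap ℝ ℂ c.re from rfl, algebraMap_smul]
        exact z.smul_mem _ ih.1
      have hcim : ((c.im : ℂ)) • ((2:ℂ)⁻¹ • (Complex.I • x + -(Complex.I • x)ᴴ)) ∈ z := by
        rw [show ((c.im : ℂ)) = algebraMap ℝ ℂ c.im from rfl, algebraMap_smul]
        exact z.smul_mem _ ih.2
      have hcreN : ((-c.im : ℂ)) • ((2:ℂ)⁻¹ • (x + -xᴴ)) ∈ z := by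
        rw [show ((-c.im : ℂ)) • ((2:ℂ)⁻¹ • (x + -xᴴ))
            = -(((c.im : ℂ)) • ((2:ℂ)⁻¹ • (x + -xᴴ))) by rw [← neg_smul]]
        refine z.neg_mem ?_
        rw [show ((c.im : ℂ)) = algebraMap ℝ ℂ c.im from rfl, algebraMap_smul]
        exact z.smul_mem _ ih.1
      have hcimI : ((c.re : ℂ)) • ((2:ℂ)⁻¹ • (Complex.I • x + -(Complex.I • x)ᴴ)) ∈ z := by
        rw [show ((c.re : ℂ)) = algebraMap ℝ ℂ c.re from rfl, algebraMap_smul]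
        exact z.smul_mem _ ih.2
      have hc : c = (c.re : ℂ) + (c.im : ℂ) * Complex.I := (Complex.re_add_im c).symm
      have hcstar : (starRingEnd ℂ) c = (c.re : ℂ) - (c.im : ℂ) * Complex.I := by
        rw [Complex.ext_iff]
        simp
      constructor
      · have e1 : (2:ℂ)⁻¹ • (c • x + -(c • x)ᴴ)
            = ((c.re : ℂ)) • ((2:ℂ)⁻¹ • (x + -xᴴ))
              + ((c.im : ℂ)) • ((2:ℂ)⁻¹ • (Complex.I • x + -(Complex.I • x)ᴴ)) := by
          ext i j
          simp only [Matrix.smul_apply, Matrix.add_apply, Matrix.neg_apply,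
            Matrix.conjTranspose_apply, smul_eq_mul, star_mul', Complex.star_def,
            Complex.conj_I]
          linear_combination ((2:ℂ)⁻¹ * (x i j)) * hc
            - ((2:ℂ)⁻¹ * ((starRingEnd ℂ) (x j i))) * hcstar
        rw [e1]; exact z.add_mem hcre hcim
      · have e2 : (2:ℂ)⁻¹ • (Complex.I • (c • x) + -(Complex.I • (c • x))ᴴ)
            = ((c.re : ℂ)) • ((2:ℂ)⁻¹ • (Complex.I • x + -(Complex.I • x)ᴴ))
              + ((-c.im : ℂ)) • ((2:ℂ)⁻¹ • (x + -xᴴ)) := by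
          ext i j
          simp only [Matrix.smul_apply, Matrix.add_apply, Matrix.neg_apply,
            Matrix.conjTranspose_apply, smul_eq_mul, star_mul', Complex.star_def,
            Complex.conj_I]
          linear_combination ((2:ℂ)⁻¹ * Complex.I * (x i j)) * hc
            + ((2:ℂ)⁻¹ * Complex.I * ((starRingEnd ℂ) (x j i))) * hcstar
            + ((c.im:ℂ) * (2:ℂ)⁻¹ * (x i j - (starRingEnd ℂ) (x j i))) * Complex.I_sq
        rw [e2]; exact z.add_mem hcimI hcreN
  -- conclude
  apply Set.Subset.antisymm hup
  intro W hW
  have hWs : Wᴴ = -W := hW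
  obtain ⟨X', Y', hXs', hYs', hq1', hq2'⟩ := decomp hd W hWs
  have hh'z : (X' ⊗ₖ (1 : M2 d) + (1 : M2 d) ⊗ₖ Y') ∈ z := hlow ⟨X', Y', hXs', hYs', rfl⟩
  set u₁ : M4 d := W - (X' ⊗ₖ (1 : M2 d) + (1 : M2 d) ⊗ₖ Y') with hu₁def
  have hu₁U : u₁ ∈ U := hm u₁ hq1' hq2'
  have hu₁skew : u₁ᴴ = -u₁ := by
    rw [hu₁def, Matrix.conjTranspose_sub, Matrix.conjTranspose_add, kron_conjT, kron_conjT,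
      Matrix.conjTranspose_one, hXs', hYs', hWs]
    rw [neg_kron, kron_neg]
    abel
  have hu₁z : u₁ ∈ z := by
    have h := (hreal u₁ hu₁U).1
    rwa [hu₁skew, neg_neg, ← two_smul ℂ, smul_smul,
      show ((2:ℂ)⁻¹ * 2) = 1 by norm_num, one_smul] at h
  have : W = u₁ + (X' ⊗ₖ (1 : M2 d) + (1 : M2 d) ⊗ₖ Y') := by rw [hu₁def]; abel
  rw [this]
  exact z.add_mem hu₁z hh'z
end

section
/- Let R ∈ U(d²) satisfy R(X⊗I)R⁻¹ ∈ 𝔲(d)⊗I and R(I⊗Y)R⁻¹ ∈ I⊗𝔲(d) for all X, Y ∈ 𝔲(d) (i.e., conjugation by R preserves each tensor factor of 𝔥). Then R is primitive: R maps every decomposable tensor of ℂᵈ ⊗ ℂᵈ to a decomposable tensor. -/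
open Matrix Kronecker Complex

/-! For `x ≠ 0` let `P` be the orthogonal projection onto `ℂx`. Conjugating the skew-Hermitian
matrix `iP ⊗ I` by `R` gives some `X' ⊗ I`, so `P' := -iX'` satisfies `P' ⊗ I = R (P ⊗ I) R⁻¹`.
Hence `P'` is idempotent of trace one, i.e. a projection onto a line `ℂu`. As `P ⊗ I` fixes
`x ⊗ y`, `P' ⊗ I` fixes `R (x ⊗ y)`, so every column of `R (x ⊗ y)` lies on `ℂu`, which makes
`R (x ⊗ y) = u ⊗ c` decomposable. -/

namespace Matrix

theorem exists_smul_eq_of_mulVec_eq_self {K n : Type*} [Field K] [CharZero K] [Fintype n]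
    [DecidableEq n] {M : Matrix n n K} (hM : IsIdempotentElem M) (htr : M.trace = 1) :
    ∃ u : n → K, ∀ v, M *ᵥ v = v → ∃ c : K, c • u = v := by
  have hf : IsIdempotentElem (toLin' M) := hM.map toLinAlgEquiv'
  have hrank : Module.finrank K (LinearMap.range (toLin' M)) = 1 := by
    have := (LinearMap.IsIdempotentElem.isProj_range _ hf).trace
    rw [trace_toLin'_eq, htr] at this
    exact_mod_cast this.symm
  obtain ⟨u, hu⟩ := finrank_le_one_iff.mp hrank.le
  refine ⟨u, fun v hv => ?_⟩
  obtain ⟨c, hc⟩ := hu ⟨v, hv ▸ LinearMap.mem_range_self (toLin' M) v⟩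
  exact ⟨c, congrArg Subtype.val hc⟩

open scoped ComplexOrder in
theorem exists_isHermitian_isIdempotentElem_trace_eq_one_mulVec_eq_self {𝕜 n : Type*}
    [RCLike 𝕜] [Fintype n] {x : n → 𝕜} (hx : x ≠ 0) :
    ∃ P : Matrix n n 𝕜, P.IsHermitian ∧ IsIdempotentElem P ∧ P.trace = 1 ∧ P *ᵥ x = x := by
  have hs : star x ⬝ᵥ x ≠ 0 := dotProduct_star_self_eq_zero.not.mpr hx
  have hs_real : star (star x ⬝ᵥ x)⁻¹ = (star x ⬝ᵥ x)⁻¹ := by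
    rw [star_inv₀, (dotProduct_star_self_nonneg x).isSelfAdjoint.star_eq]
  refine ⟨(star x ⬝ᵥ x)⁻¹ • vecMulVec x (star x), ?_, ?_, ?_, ?_⟩
  · simp [IsHermitian, conjTranspose_smul, hs_real]
  · rw [IsIdempotentElem, smul_mul_smul, vecMulVec_mul_vecMulVec, vecMulVec_smul, smul_smul,
      mul_assoc, inv_mul_cancel₀ hs, mul_one]
  · rw [trace_smul, trace_vecMulVec, dotProduct_comm x, smul_eq_mul, inv_mul_cancel₀ hs]
  · rw [smul_mulVec, vecMulVec_mulVec]
    simp [smul_smul, hs]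

section Conj

variable {α n : Type*} [CommRing α] [Fintype n] [DecidableEq n] {M : Matrix n n α}

theorem isIdempotentElem_conj (hM : IsUnit M) {N : Matrix n n α} (hN : IsIdempotentElem N) :
    IsIdempotentElem (M * N * M⁻¹) := by
  have hdet := (isUnit_iff_isUnit_det M).mp hM
  rw [IsIdempotentElem]
  simp only [Matrix.mul_assoc, nonsing_inv_mul_cancel_left _ _ hdet]
  rw [← Matrix.mul_assoc N N, hN.eq]

theorem conj_mulVec_mulVec (hM : IsUnit M) (N : Matrix n n α) (v : n → α) :
    (M * N * M⁻¹) *ᵥ (M *ᵥ v) = M *ᵥ (N *ᵥ v) := by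
  rw [mulVec_mulVec, nonsing_inv_mul_cancel_right _ _ ((isUnit_iff_isUnit_det M).mp hM),
    mulVec_mulVec]

end Conj

theorem kronecker_one_injective {α l m n : Type*} [MulZeroOneClass α] [DecidableEq n]
    [Nonempty n] : Function.Injective fun A : Matrix l m α => A ⊗ₖ (1 : Matrix n n α) := by
  intro A B h
  ext i j
  obtain ⟨b⟩ := ‹Nonempty n›
  simpa using congrFun₂ h (i, b) (j, b)

theorem isIdempotentElem_kronecker_one_iff {α m n : Type*} [CommSemiring α] [Fintype m]
    [Fintype n] [DecidableEq n] [Nonempty n] {A : Matrix m m α} :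
    IsIdempotentElem (A ⊗ₖ (1 : Matrix n n α)) ↔ IsIdempotentElem A := by
  rw [IsIdempotentElem, ← mul_kronecker_mul, Matrix.one_mul, kronecker_one_injective.eq_iff]
  rfl

theorem kronecker_one_mulVec_apply {α l m n : Type*} [CommSemiring α] [Fintype m] [Fintype n]
    [DecidableEq n] (A : Matrix l m α) (z : m × n → α) (i : l) (b : n) :
    ((A ⊗ₖ (1 : Matrix n n α)) *ᵥ z) (i, b) = (A *ᵥ fun k => z (k, b)) i := by
  simp [mulVec, dotProduct, Fintype.sum_prod_type, one_apply]

end Matrix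

theorem kronecker_one_mulVec_tensorVec {d : ℕ} (A : Matrix (Fin d) (Fin d) ℂ) (x y : Fin d → ℂ) :
    (A ⊗ₖ (1 : Matrix (Fin d) (Fin d) ℂ)) *ᵥ tensorVec x y = tensorVec (A *ᵥ x) y := by
  ext ⟨i, b⟩
  rw [kronecker_one_mulVec_apply]
  simp [tensorVec, mulVec, dotProduct, Finset.sum_mul, mul_assoc]

theorem decomposable_of_kronecker_one_mulVec_eq_self {d : ℕ} {P : Matrix (Fin d) (Fin d) ℂ}
    (hP : IsIdempotentElem P) (htr : P.trace = 1) {z : Fin d × Fin d → ℂ}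
    (hz : (P ⊗ₖ (1 : Matrix (Fin d) (Fin d) ℂ)) *ᵥ z = z) : Decomposable z := by
  obtain ⟨u, hu⟩ := exists_smul_eq_of_mulVec_eq_self hP htr
  choose c hc using fun b => hu (fun k => z (k, b))
    (funext fun j => by rw [← kronecker_one_mulVec_apply, hz])
  exact ⟨u, c, funext fun ⟨j, b⟩ => by simpa [tensorVec, mul_comm] using (congrFun (hc b) j).symm⟩

theorem stmt15_general {d : ℕ} (R : Matrix (Fin d × Fin d) (Fin d × Fin d) ℂ)
    (hR : R ∈ Matrix.unitaryGroup (Fin d × Fin d) ℂ)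
    (h1 : ∀ X : Matrix (Fin d) (Fin d) ℂ, Xᴴ = -X →
      ∃ X' : Matrix (Fin d) (Fin d) ℂ, X'ᴴ = -X' ∧ R * (X ⊗ₖ (1 : Matrix (Fin d) (Fin d) ℂ)) * R⁻¹ =
        X' ⊗ₖ (1 : Matrix (Fin d) (Fin d) ℂ)) :
    Primitive R := by
  intro x y
  rcases eq_or_ne x 0 with rfl | hx
  · have h0 (v : Fin d → ℂ) : tensorVec 0 v = 0 := funext fun _ => zero_mul _
    exact ⟨0, 0, by rw [h0, mulVec_zero, h0]⟩
  have : Nonempty (Fin d) := ⟨(Function.ne_iff.mp hx).choose⟩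
  have hRunit : IsUnit R := Unitary.isUnit_coe (U := ⟨R, hR⟩)
  obtain ⟨P, hPherm, hPidem, hPtr, hPx⟩ :=
    exists_isHermitian_isIdempotentElem_trace_eq_one_mulVec_eq_self hx
  obtain ⟨X', -, hX'⟩ := h1 (I • P) (by simp [conjTranspose_smul, hPherm.eq])
  have hconj : R * (P ⊗ₖ 1) * R⁻¹ = (-I • X') ⊗ₖ (1 : Matrix (Fin d) (Fin d) ℂ) := by
    rw [smul_kronecker, ← hX', smul_kronecker, Matrix.mul_smul, Matrix.smul_mul, smul_smul]
    simp
  apply decomposable_of_kronecker_one_mulVec_eq_self (P := -I • X')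
  · rw [← isIdempotentElem_kronecker_one_iff (n := Fin d), ← hconj]
    exact isIdempotentElem_conj hRunit (isIdempotentElem_kronecker_one_iff.mpr hPidem)
  · have htr := congrArg trace hconj
    rw [trace_conj hRunit, trace_kronecker, trace_kronecker, hPtr, one_mul] at htr
    exact (mul_eq_right₀ (by simpa using Fintype.card_ne_zero (α := Fin d))).mp htr.symm
  · rw [← hconj, conj_mulVec_mulVec hRunit, kronecker_one_mulVec_tensorVec, hPx]

/-- If conjugation by a unitary `R` on `ℂᵈ ⊗ ℂᵈ` preserves each tensor
factor of `𝔥` (sends `𝔲(d)⊗I` into `𝔲(d)⊗I` and `I⊗𝔲(d)` into `I⊗𝔲(d)`), then `R` is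
primitive. -/
theorem stmt15 {d : ℕ} (R : Matrix (Fin d × Fin d) (Fin d × Fin d) ℂ)
    (hR : R ∈ Matrix.unitaryGroup (Fin d × Fin d) ℂ)
    (h1 : ∀ X : Matrix (Fin d) (Fin d) ℂ, Xᴴ = -X →
      ∃ X' : Matrix (Fin d) (Fin d) ℂ, X'ᴴ = -X' ∧ R * (X ⊗ₖ (1 : Matrix (Fin d) (Fin d) ℂ)) * R⁻¹ =
        X' ⊗ₖ (1 : Matrix (Fin d) (Fin d) ℂ))
    (h2 : ∀ Y : Matrix (Fin d) (Fin d) ℂ, Yᴴ = -Y →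
      ∃ Y' : Matrix (Fin d) (Fin d) ℂ, Y'ᴴ = -Y' ∧ R * ((1 : Matrix (Fin d) (Fin d) ℂ) ⊗ₖ Y) * R⁻¹ =
        (1 : Matrix (Fin d) (Fin d) ℂ) ⊗ₖ Y') :
    Primitive R :=
  stmt15_general R hR h1
end
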